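/- arXiv:2304.13528 — 4 statements merged into one kernel-verified Lean document; each statement's English description precedes it below -/
import Mathlib

section
/- Let b > 0 and c ∈ ℝ, and suppose either a ≥ 1, or 0 ≤ a < 1 and b ≥ |c|·√(1 − a²). Then the Abel equation (E) has no 2π-periodic solution y with y(x) < 0 for all x. -/
set_option maxHeartbeats 1000000

open Real Set

lemma gronwall_aux {z g : ℝ → ℝ} {θ K u v : ℝ} (huv : u < v)
    (hz : ∀ x, HasDerivAt z (g x) x)
    (hlow : ∀ x ∈ Set.Icc u v, z x < θ → K * (z x - θ) ≤ g x)
    (hu : θ ≤ z u) (hv : z v < θ) : False := by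
  have hzc : Continuous z := by
    apply continuous_iff_continuousAt.2
    exact fun x => (hz x).differentiableAt.continuousAt
  set S : Set ℝ := Set.Icc u v ∩ {x | θ ≤ z x} with hS
  have hSne : S.Nonempty := ⟨u, ⟨le_refl u, le_of_lt huv⟩, hu⟩
  have hSbdd : BddAbove S := (bddAbove_Icc).mono (Set.inter_subset_left)
  have hSclosed : IsClosed S :=
    isClosed_Icc.inter (isClosed_le continuous_const hzc)
  set w : ℝ := sSup S with hw
  have hwS : w ∈ S := hSclosed.csSup_mem hSne hSbdd
  have hwv : w < v := lt_of_le_of_ne (hwS.1.2) (by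
    intro h; rw [h] at hwS; exact absurd hwS.2 (not_le.2 hv))
  have huw : u ≤ w := hwS.1.1
  have hbelow : ∀ x, w < x → x ≤ v → z x < θ := by
    intro x h1 h2
    by_contra hc
    have : x ∈ S := ⟨⟨le_trans huw (le_of_lt h1), h2⟩, not_lt.1 hc⟩
    exact absurd (le_csSup hSbdd this) (not_le.2 h1)
  set φ : ℝ → ℝ := fun x => (z x - θ) * Real.exp (-K * x) with hφ
  have hφd : ∀ x, HasDerivAt φ ((g x - K * (z x - θ)) * Real.exp (-K * x)) x := by
    intro x
    have h1 : HasDerivAt (fun x => z x - θ) (g x) x := (hz x).sub_const θ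
    have h2 : HasDerivAt (fun x => Real.exp (-K * x)) (-K * Real.exp (-K * x)) x := by
      have h0 : HasDerivAt (fun x : ℝ => -K * x) (-K) x := by
        simpa using (hasDerivAt_id x).const_mul (-K)
      simpa [mul_comm] using h0.exp
    have := h1.mul h2
    refine this.congr_deriv ?_
    ring
  have hmono : MonotoneOn φ (Set.Icc w v) := by
    apply monotoneOn_of_deriv_nonneg (convex_Icc w v)
    · exact (Continuous.continuousOn (by continuity))
    · intro x hx
      exact (hφd x).differentiableAt.differentiableWithinAt
    · intro x hx
      rw [interior_Icc] at hx
      rw [(hφd x).deriv]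
      have hzx : z x < θ := hbelow x hx.1 (le_of_lt hx.2)
      have := hlow x ⟨le_trans huw (le_of_lt hx.1), le_of_lt hx.2⟩ hzx
      have hexp : (0:ℝ) < Real.exp (-K * x) := Real.exp_pos _
      nlinarith
  have h1 : φ w ≤ φ v := hmono ⟨le_refl w, le_of_lt hwv⟩ ⟨le_of_lt hwv, le_refl v⟩ (le_of_lt hwv)
  have hzw : θ ≤ z w := hwS.2
  have h2 : 0 ≤ φ w := mul_nonneg (by linarith) (le_of_lt (Real.exp_pos _))
  have h3 : φ v < 0 :=
    mul_neg_of_neg_of_pos (by linarith) (Real.exp_pos _)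
  linarith


lemma invariance_aux (a b c β : ℝ) (hβpos : 0 < β) {y z : ℝ → ℝ}
    (hz' : ∀ x, HasDerivAt z ((b + c * Real.cos x) + (Real.sin x - a) * y x) x)
    (hzpos : ∀ x, 0 < z x) (hzc : Continuous z)
    (hyz : ∀ t, y t = -(z t)⁻¹)
    (hkey : ∀ x, β * (Real.sin x - a) ≤ b + c * Real.cos x)
    (ha2 : ∀ x, Real.sin x - a ≤ 2)
    {u v : ℝ} (huv : u < v) (hzu : 1/β ≤ z u) (hzv : z v < 1/β) : False := by
  obtain ⟨xm, hxmI, hxm⟩ := isCompact_Icc.exists_isMinOn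
    (Set.nonempty_Icc.2 huv.le) (hzc.continuousOn (s := Set.Icc u v))
  have hm₀ : 0 < z xm := hzpos xm
  have hlow : ∀ t ∈ Set.Icc u v, z t < 1/β →
      (2*β/z xm) * (z t - 1/β) ≤ (b + c * Real.cos t) + (Real.sin t - a) * y t := by
    intro t ht hzt
    have hzt0 : (z t) ≠ 0 := (hzpos t).ne'
    have hmz : z xm ≤ z t := hxm ht
    have e : (b + c * Real.cos t) + (Real.sin t - a) * y t - (2*β/z xm) * (z t - 1/β)
        = ((b + c * Real.cos t) - β * (Real.sin t - a))
          + (β * z t - 1) * ((Real.sin t - a) / z t - 2 / z xm) := by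
      rw [hyz t]
      field_simp
      ring
    have t1 : 0 ≤ (b + c * Real.cos t) - β * (Real.sin t - a) := by
      linarith [hkey t]
    have t2 : β * z t - 1 ≤ 0 := by
      have hββ : β * (1/β) = 1 := by field_simp
      have h := mul_lt_mul_of_pos_left hzt hβpos
      rw [hββ] at h
      linarith
    have t3 : (Real.sin t - a) / z t - 2 / z xm ≤ 0 := by
      rcases le_or_gt (Real.sin t - a) 0 with h | h
      · have ha' : (Real.sin t - a) / z t ≤ 0 :=
          div_nonpos_iff.mpr (Or.inr ⟨h, (hzpos t).le⟩)
        have hb' : (0:ℝ) < 2 / z xm := by positivity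
        linarith
      · have h1 : (Real.sin t - a) / z t ≤ 2 / z t :=
          (div_le_div_iff_of_pos_right (hzpos t)).2 (ha2 t)
        have h2' : 2 / z t ≤ 2 / z xm :=
          div_le_div_of_nonneg_left (by norm_num) hm₀ hmz
        linarith
    linarith [mul_nonneg_of_nonpos_of_nonpos t2 t3, e,
      (by linarith [e, t1, mul_nonneg_of_nonpos_of_nonpos t2 t3] :
        0 ≤ (b + c * Real.cos t) + (Real.sin t - a) * y t - (2*β/z xm) * (z t - 1/β))]
  exact gronwall_aux huv hz' hlow hzu hzv

/-- If `b > 0` and either `a ≥ 1`, or `0 ≤ a < 1` and `b ≥ |c|·√(1 − a²)`,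
then the Abel equation `y′ = (b + c·cos x)·y² + (sin x − a)·y³` has no
everywhere-negative 2π-periodic solution. -/
theorem abel_no_negative_periodic_solution_definite_sign
    (a b c : ℝ) (hb : 0 < b)
    (hcase : 1 ≤ a ∨ (0 ≤ a ∧ a < 1 ∧ |c| * Real.sqrt (1 - a ^ 2) ≤ b)) :
    ¬ ∃ y : ℝ → ℝ,
      (∀ x : ℝ, HasDerivAt y
        ((b + c * Real.cos x) * (y x) ^ 2 + (Real.sin x - a) * (y x) ^ 3) x) ∧
      (∀ x : ℝ, y (x + 2 * Real.pi) = y x) ∧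
      (∀ x : ℝ, y x < 0) := by
  rintro ⟨y, hy, hper, hneg⟩
  have hpi := Real.pi_pos
  have hy0 : ∀ x, y x ≠ 0 := fun x => (hneg x).ne
  have hyc : Continuous y := continuous_iff_continuousAt.2
    (fun x => (hy x).differentiableAt.continuousAt)
  set z : ℝ → ℝ := fun x => -(y x)⁻¹ with hzdef
  have hzpos : ∀ x, 0 < z x := fun x => by
    simp only [hzdef]
    have : (y x)⁻¹ < 0 := inv_lt_zero.2 (hneg x)
    linarith
  have hzc : Continuous z := (hyc.inv₀ hy0).neg
  have hz' : ∀ x, HasDerivAt z ((b + c * Real.cos x) + (Real.sin x - a) * y x) x := by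
    intro x
    have h1 := ((hy x).inv (hy0 x)).neg
    refine h1.congr_deriv ?_
    have h2 := hy0 x
    field_simp
  have hzper : ∀ x, z (x + 2 * π) = z x := fun x => by simp only [hzdef, hper x]
  -- continuity facts
  have hcB : Continuous fun x => b + c * Real.cos x := by continuity
  have hcA : Continuous fun x => Real.sin x - a := by continuity
  have hcAy : Continuous fun x => (Real.sin x - a) * y x := hcA.mul hyc
  have hcBy : Continuous fun x => (b + c * Real.cos x) / y x := hcB.div hyc hy0
  -- FTC identity I2
  have hI2 : ∫ x in (0:ℝ)..(2*π),
      ((b + c * Real.cos x) + (Real.sin x - a) * y x) = 0 := by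
    rw [intervalIntegral.integral_eq_sub_of_hasDerivAt (fun x _ => hz' x)
      ((hcB.add hcAy).intervalIntegrable _ _)]
    have := hzper 0
    simp only [zero_add] at this
    rw [this]; ring
  -- FTC identity I1
  have hz2' : ∀ x, HasDerivAt (fun x => z x * z x / 2)
      (-((b + c * Real.cos x) / y x) - (Real.sin x - a)) x := by
    intro x
    have h := ((hz' x).mul (hz' x)).div_const 2
    refine h.congr_deriv ?_
    have h2 := hy0 x
    simp only [hzdef]
    field_simp
    ring
  have hI1 : ∫ x in (0:ℝ)..(2*π),
      (-((b + c * Real.cos x) / y x) - (Real.sin x - a)) = 0 := by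
    rw [intervalIntegral.integral_eq_sub_of_hasDerivAt (fun x _ => hz2' x)
      (((hcBy.neg).sub hcA).intervalIntegrable _ _)]
    have := hzper 0
    simp only [zero_add] at this
    rw [this]; ring
  -- basic integrals
  have hIB : ∫ x in (0:ℝ)..(2*π), (b + c * Real.cos x) = 2*π*b := by
    rw [intervalIntegral.integral_add (f := fun _ => b) (g := fun x => c * Real.cos x) ((continuous_const).intervalIntegrable _ _)
      ((continuous_const.mul Real.continuous_cos).intervalIntegrable _ _),
      intervalIntegral.integral_const, intervalIntegral.integral_const_mul, integral_cos]
    simp [Real.sin_two_pi]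
  have hIA : ∫ x in (0:ℝ)..(2*π), (Real.sin x - a) = -(2*π*a) := by
    rw [intervalIntegral.integral_sub (Real.continuous_sin.intervalIntegrable _ _)
      ((continuous_const).intervalIntegrable _ _),
      intervalIntegral.integral_const, integral_sin]
    simp [Real.cos_two_pi]
  -- derived identities
  have hAy : ∫ x in (0:ℝ)..(2*π), (Real.sin x - a) * y x = -(2*π*b) := by
    rw [intervalIntegral.integral_add (hcB.intervalIntegrable _ _)
      (hcAy.intervalIntegrable _ _), hIB] at hI2
    linarith
  have hBy : ∫ x in (0:ℝ)..(2*π), (b + c * Real.cos x) / y x = 2*π*a := by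
    rw [intervalIntegral.integral_sub (f := fun x => -((b + c * Real.cos x) / y x)) (g := fun x => Real.sin x - a) ((hcBy.neg).intervalIntegrable _ _)
      (hcA.intervalIntegrable _ _), hIA, intervalIntegral.integral_neg] at hI1
    linarith

  have hyz : ∀ t, y t = -(z t)⁻¹ := by
    intro t
    simp only [hzdef, inv_neg, inv_inv, neg_neg]
  rcases hcase with ha1 | ⟨ha0, halt1, hcb⟩
  · -- case a ≥ 1
    have hnn : 0 ≤ ∫ x in (0:ℝ)..(2*π), (Real.sin x - a) * y x := by
      apply intervalIntegral.integral_nonneg (by linarith)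
      intro u hu
      have h1 : Real.sin u - a ≤ 0 := by linarith [Real.sin_le_one u]
      exact mul_nonneg_of_nonpos_of_nonpos h1 (le_of_lt (hneg u))
    rw [hAy] at hnn
    nlinarith
  · rcases eq_or_lt_of_le ha0 with haz | hapos
    · -- case a = 0
      have hcb' : |c| ≤ b := by
        rw [← haz] at hcb; simpa using hcb
      have hBnn : ∀ x, 0 ≤ b + c * Real.cos x := by
        intro x
        have h1 : |c * Real.cos x| ≤ |c| := by
          rw [abs_mul]
          nlinarith [Real.abs_cos_le_one x, abs_nonneg c]
        have h2 := neg_abs_le (c * Real.cos x)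
        linarith
      have hfnn : ∀ x, 0 ≤ -((b + c * Real.cos x) / y x) := by
        intro x
        have : (b + c * Real.cos x) / y x ≤ 0 :=
          div_nonpos_iff.mpr (Or.inl ⟨hBnn x, (hneg x).le⟩)
        linarith
      have hintf : ∀ p q : ℝ, IntervalIntegrable
          (fun x => -((b + c * Real.cos x) / y x)) MeasureTheory.volume p q :=
        fun p q => (hcBy.neg).intervalIntegrable p q
      have h0 : ∫ x in (0:ℝ)..(2*π), -((b + c * Real.cos x) / y x) = 0 := by
        rw [intervalIntegral.integral_neg, hBy, ← haz]
        ring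
      have e1 : (∫ x in (0:ℝ)..(π/3), -((b + c * Real.cos x) / y x))
          + (∫ x in (π/3)..(2*π/3), -((b + c * Real.cos x) / y x))
          = ∫ x in (0:ℝ)..(2*π/3), -((b + c * Real.cos x) / y x) :=
        intervalIntegral.integral_add_adjacent_intervals (hintf _ _) (hintf _ _)
      have e2 : (∫ x in (0:ℝ)..(2*π/3), -((b + c * Real.cos x) / y x))
          + (∫ x in (2*π/3)..(2*π), -((b + c * Real.cos x) / y x))
          = ∫ x in (0:ℝ)..(2*π), -((b + c * Real.cos x) / y x) :=
        intervalIntegral.integral_add_adjacent_intervals (hintf _ _) (hintf _ _)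
      have hmid : 0 < ∫ x in (π/3)..(2*π/3), -((b + c * Real.cos x) / y x) := by
        apply intervalIntegral.intervalIntegral_pos_of_pos_on (hintf _ _)
        · intro x hx
          have hx1 : π/3 < x := hx.1
          have hx2 : x < 2*π/3 := hx.2
          have hmem1 : x ∈ Set.Icc 0 π := ⟨by linarith, by linarith⟩
          have hc1 : Real.cos x < Real.cos (π/3) :=
            Real.strictAntiOn_cos ⟨by linarith, by linarith⟩ hmem1 hx1
          have hc2 : Real.cos (2*π/3) < Real.cos x :=
            Real.strictAntiOn_cos hmem1 ⟨by linarith, by linarith⟩ hx2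
          rw [Real.cos_pi_div_three] at hc1
          rw [show (2*π/3 : ℝ) = π - π/3 by ring, Real.cos_pi_sub,
            Real.cos_pi_div_three] at hc2
          have habs : |Real.cos x| ≤ 1/2 := abs_le.2 ⟨by linarith, by linarith⟩
          have h3 : |c * Real.cos x| ≤ b * (1/2) := by
            rw [abs_mul]
            exact mul_le_mul hcb' habs (abs_nonneg _) hb.le
          have h4 := neg_abs_le (c * Real.cos x)
          have hBpos : 0 < b + c * Real.cos x := by linarith
          have : (b + c * Real.cos x) / y x < 0 := div_neg_of_pos_of_neg hBpos (hneg x)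
          linarith
        · linarith
      have hout1 : 0 ≤ ∫ x in (0:ℝ)..(π/3), -((b + c * Real.cos x) / y x) :=
        intervalIntegral.integral_nonneg (by linarith) (fun u _ => hfnn u)
      have hout2 : 0 ≤ ∫ x in (2*π/3)..(2*π), -((b + c * Real.cos x) / y x) :=
        intervalIntegral.integral_nonneg (by linarith) (fun u _ => hfnn u)
      rw [h0] at e2
      linarith
    · -- case 0 < a < 1
      have hd : (0:ℝ) < 1 - a^2 := by nlinarith
      obtain ⟨β, hβpos, hβd⟩ : ∃ β : ℝ, 0 < β ∧ β * (1-a^2) = a*b :=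
        ⟨a*b/(1-a^2), div_pos (mul_pos hapos hb) hd, by field_simp⟩
      have hs2 : Real.sqrt (1-a^2) ^ 2 = 1-a^2 := Real.sq_sqrt hd.le
      have hs0 : 0 < Real.sqrt (1-a^2) := Real.sqrt_pos.2 hd
      have hs1 : Real.sqrt (1-a^2) < 1 := by nlinarith
      have key0 : c^2 * (1-a^2) ≤ b^2 := by
        nlinarith [hcb, hs2, sq_abs c, mul_nonneg (abs_nonneg c) hs0.le,
          mul_le_mul hcb hcb (mul_nonneg (abs_nonneg c) hs0.le) hb.le]
      have hbβa : 0 < b + β*a := by nlinarith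
      have hq1 : (b + β*a)*(1-a^2) = b := by linear_combination a * hβd
      have h2 : c^2 + β^2 ≤ (b + β*a)^2 := by
        have e1 : (b + β*a)^2*((1-a^2)*(1-a^2)) = b^2 := by
          linear_combination ((b+β*a)*(1-a^2) + b) * hq1
        have e2 : β^2*((1-a^2)*(1-a^2)) = a^2*b^2 := by
          linear_combination (β*(1-a^2) + a*b) * hβd
        have e4 : (c^2 + β^2)*((1-a^2)*(1-a^2)) ≤ (b + β*a)^2*((1-a^2)*(1-a^2)) := by
          nlinarith [mul_le_mul_of_nonneg_right key0 hd.le, e2, e1]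
        exact (mul_le_mul_iff_of_pos_right (mul_pos hd hd)).1 e4
      have hkey : ∀ x, β * (Real.sin x - a) ≤ b + c * Real.cos x := by
        intro x
        have h1 : (c * Real.cos x - β * Real.sin x)^2 ≤ c^2 + β^2 := by
          nlinarith [Real.sin_sq_add_cos_sq x, sq_nonneg (c * Real.sin x + β * Real.cos x)]
        nlinarith [h1, h2, hbβa, sq_nonneg (c * Real.cos x - β * Real.sin x + (b + β*a))]
      by_cases hall : ∀ x, -β ≤ y x
      · -- case A : y ≥ -β everywhere
        have hmc : Continuous fun x => max (Real.sin x - a) 0 :=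
          hcA.max continuous_const
        have hptw : ∀ x ∈ Set.Icc (0:ℝ) (2*π),
            -((Real.sin x - a) * y x) ≤ β * max (Real.sin x - a) 0 := by
          intro x _
          rcases le_or_gt 0 (Real.sin x - a) with hA | hA
          · rw [max_eq_left hA]
            have h1 : -(y x) ≤ β := by linarith [hall x]
            nlinarith [mul_le_mul_of_nonneg_left h1 hA]
          · rw [max_eq_right hA.le]
            nlinarith [hneg x]
        have hle1 : 2*π*b ≤ ∫ x in (0:ℝ)..(2*π), β * max (Real.sin x - a) 0 := by
          have h : ∫ x in (0:ℝ)..(2*π), -((Real.sin x - a) * y x)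
              ≤ ∫ x in (0:ℝ)..(2*π), β * max (Real.sin x - a) 0 :=
            intervalIntegral.integral_mono_on (by linarith)
              ((hcAy.neg).intervalIntegrable _ _)
              ((continuous_const.mul hmc).intervalIntegrable _ _) hptw
          rw [intervalIntegral.integral_neg, hAy] at h
          linarith
        have hsplit : (∫ x in (0:ℝ)..π, max (Real.sin x - a) 0)
            + (∫ x in π..(2*π), max (Real.sin x - a) 0)
            = ∫ x in (0:ℝ)..(2*π), max (Real.sin x - a) 0 :=
          intervalIntegral.integral_add_adjacent_intervals
            (hmc.intervalIntegrable _ _) (hmc.intervalIntegrable _ _)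
        have hb1 : ∫ x in (0:ℝ)..π, max (Real.sin x - a) 0 ≤ π * (1-a) := by
          have hconst : ∫ _x in (0:ℝ)..π, (1-a) = π * (1-a) := by
            rw [intervalIntegral.integral_const, smul_eq_mul]
            ring
          rw [← hconst]
          apply intervalIntegral.integral_mono_on hpi.le
            (hmc.intervalIntegrable _ _) (continuous_const.intervalIntegrable _ _)
          intro x _
          exact max_le (by linarith [Real.sin_le_one x]) (by linarith)
        have hb2 : ∫ x in π..(2*π), max (Real.sin x - a) 0 ≤ 0 := by
          have step : ∫ x in π..(2*π), max (Real.sin x - a) 0 ≤ ∫ _x in π..(2*π), (0:ℝ) := by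
            apply intervalIntegral.integral_mono_on (by linarith)
              (hmc.intervalIntegrable _ _) (continuous_const.intervalIntegrable _ _)
            intro x hx
            have h1 : 0 ≤ Real.sin (x - π) :=
              Real.sin_nonneg_of_nonneg_of_le_pi (by linarith [hx.1]) (by linarith [hx.2])
            rw [Real.sin_sub_pi] at h1
            exact max_le (by linarith) le_rfl
          simpa using step
        have hle2 : ∫ x in (0:ℝ)..(2*π), β * max (Real.sin x - a) 0 ≤ β * (π * (1-a)) := by
          rw [intervalIntegral.integral_const_mul]
          have : ∫ x in (0:ℝ)..(2*π), max (Real.sin x - a) 0 ≤ π * (1-a) := by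
            rw [← hsplit]; linarith
          nlinarith [hβpos]
        have hfin : 2*π*b ≤ β * (π * (1-a)) := le_trans hle1 hle2
        have e3 : β*(π*(1-a))*(1+a) = π*(a*b) := by linear_combination π * hβd
        nlinarith [hfin, e3, mul_pos hpi hb, mul_pos (mul_pos hpi hapos) hb,
          mul_le_mul_of_nonneg_right hfin (by linarith : (0:ℝ) ≤ 1 + a)]
      · -- case B : y < -β somewhere, hence everywhere
        push_neg at hall
        obtain ⟨x₁, hx₁⟩ := hall
        have hallB : ∀ x, y x < -β := by
          intro x
          by_contra hcon
          push_neg at hcon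
          -- Gronwall setup
          set k : ℤ := ⌊(x - x₁)/(2*π)⌋ + 1 with hk
          have hklt : (x - x₁)/(2*π) < (k:ℝ) := by
            rw [hk]; push_cast
            exact Int.lt_floor_add_one _
          have h2π : (0:ℝ) < 2*π := by linarith
          set u : ℝ := x - (k:ℝ)*(2*π) with hu
          have hu_lt : u < x₁ := by
            rw [hu]
            have := (div_lt_iff₀ h2π).1 hklt
            linarith
          have hyper : Function.Periodic y (2*π) := hper
          have hyu : y u = y x := by
            rw [hu]
            exact hyper.sub_int_mul_eq k
          have hzu : 1/β ≤ z u := by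
            have h1 : 0 < -(y u) := by rw [hyu]; linarith [hneg x]
            have h2 : -(y u) ≤ β := by rw [hyu]; linarith
            have h3 := one_div_le_one_div_of_le h1 h2
            simp only [hzdef]
            simpa [one_div, inv_neg] using h3
          have hzv : z x₁ < 1/β := by
            have h1 : β < -(y x₁) := by linarith
            have h3 := one_div_lt_one_div_of_lt hβpos h1
            simp only [hzdef]
            simpa [one_div, inv_neg] using h3
          exact invariance_aux a b c β hβpos hz' hzpos hzc hyz hkey
            (fun t => by nlinarith [Real.sin_le_one t]) hu_lt hzu hzv
        -- now y < -β everywhere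
        have hptwB : ∀ x ∈ Set.Icc (0:ℝ) (2*π),
            (b + c * Real.cos x) / y x ≤ (max (|c| - b) 0) / β := by
          intro x _
          have hy1 : y x < -β := hallB x
          rcases le_or_gt 0 (b + c * Real.cos x) with hB | hB
          · have h1 : (b + c * Real.cos x) / y x ≤ 0 :=
              div_nonpos_iff.mpr (Or.inl ⟨hB, (hneg x).le⟩)
            have h2 : 0 ≤ max (|c| - b) 0 / β := by positivity
            linarith
          · have hβneg : -β < 0 := by linarith
            have hinv : (-β)⁻¹ < (y x)⁻¹ :=
              (inv_lt_inv_of_neg hβneg (hneg x)).2 hy1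
            have h3 : (b + c * Real.cos x) * (y x)⁻¹ < (b + c * Real.cos x) * (-β)⁻¹ :=
              mul_lt_mul_of_neg_left hinv hB
            have h4 : (b + c * Real.cos x) * (-β)⁻¹ = (-(b + c * Real.cos x))/β := by
              rw [inv_neg]
              field_simp
            have h5 : -(b + c * Real.cos x) ≤ |c| - b := by
              have h1' : |c * Real.cos x| ≤ |c| := by
                rw [abs_mul]
                nlinarith [Real.abs_cos_le_one x, abs_nonneg c]
              have h2' := neg_abs_le (c * Real.cos x)
              linarith
            have h6 : (-(b + c * Real.cos x))/β ≤ (max (|c| - b) 0)/β := by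
              apply (div_le_div_iff_of_pos_right hβpos).2
              exact le_trans h5 (le_max_left _ _)
            rw [div_eq_mul_inv]
            linarith
        have hle : 2*π*a ≤ 2*π * ((max (|c| - b) 0) / β) := by
          have h : ∫ x in (0:ℝ)..(2*π), (b + c * Real.cos x) / y x
              ≤ ∫ _x in (0:ℝ)..(2*π), (max (|c| - b) 0) / β :=
            intervalIntegral.integral_mono_on (by linarith)
              (hcBy.intervalIntegrable _ _) (continuous_const.intervalIntegrable _ _) hptwB
          rw [hBy, intervalIntegral.integral_const, smul_eq_mul] at h
          linarith
        have haβ : a * β ≤ max (|c| - b) 0 := by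
          have h2' : a ≤ max (|c| - b) 0 / β := by nlinarith [hpi]
          calc a*β ≤ (max (|c| - b) 0 / β)*β := mul_le_mul_of_nonneg_right h2' hβpos.le
            _ = max (|c| - b) 0 := by field_simp
        rcases le_or_gt (|c|) b with hcb2 | hcb2
        · have hm : max (|c| - b) 0 = 0 := max_eq_right (by linarith)
          rw [hm] at haβ
          nlinarith [mul_pos hapos hβpos]

        · have hm : max (|c| - b) 0 = |c| - b := max_eq_left (by linarith)
          rw [hm] at haβ
          have h1 : |c| * (1 - a^2) < b := by
            rcases eq_or_lt_of_le (abs_nonneg c) with hc0 | hc0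
            · rw [← hc0]
              simpa using hb
            · have e5 : |c| * (1-a^2) = |c| * Real.sqrt (1-a^2) * Real.sqrt (1-a^2) := by
                linear_combination (-(|c|)) * hs2
              have e6 : |c| * Real.sqrt (1-a^2) * Real.sqrt (1-a^2) ≤ b * Real.sqrt (1-a^2) :=
                mul_le_mul_of_nonneg_right hcb hs0.le
              have e7 : b * Real.sqrt (1-a^2) < b*1 := (mul_lt_mul_iff_right₀ hb).2 hs1
              linarith
          have h8 := mul_le_mul_of_nonneg_right haβ hd.le
          have e9 : a*β*(1-a^2) = a^2*b := by linear_combination a*hβd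
          nlinarith [h8, e9, h1]
end

section
/- Let a, b, c ∈ ℝ and let y* be a 2π-periodic solution of (E) with ∫₀^{2π} (2(b + c·cos x)·y*(x) + 3(sin x − a)·y*(x)²) dx > 0. Then y* is an unstable periodic solution: there exists δ > 0 such that every solution z of (E) with z(0) ∈ (y*(0), y*(0) + δ) is defined on [0, 2π] and satisfies z(2π) > z(0), and every solution z with z(0) ∈ (y*(0) − δ, y*(0)) is defined on [0, 2π] and satisfies z(2π) < z(0). Symmetrically, if the integral is < 0 then the inequalities are reversed and y* is stable. -/
open Real

noncomputable def abelF (a b c : ℝ) (x y : ℝ) : ℝ :=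
  (b + c * Real.cos x) * y ^ 2 + (Real.sin x - a) * y ^ 3


lemma abelA_abs (b c x : ℝ) : |b + c * Real.cos x| ≤ |b| + |c| := by
  calc |b + c * Real.cos x| ≤ |b| + |c * Real.cos x| := abs_add_le _ _
    _ ≤ |b| + |c| := by
        rw [abs_mul]
        nlinarith [abs_nonneg c, Real.abs_cos_le_one x]

lemma abelB_abs (a x : ℝ) : |Real.sin x - a| ≤ 1 + |a| := by
  calc |Real.sin x - a| ≤ |Real.sin x| + |a| := abs_sub _ _
    _ ≤ 1 + |a| := by nlinarith [Real.abs_sin_le_one x]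

/-- Lipschitz estimate for the cubic RHS on `[-K,K]`. -/
lemma abelF_lip (a b c K x y y' : ℝ) (hy : |y| ≤ K) (hy' : |y'| ≤ K) :
    |abelF a b c x y - abelF a b c x y'| ≤
      ((|b| + |c|) * (2 * K) + (1 + |a|) * (3 * K ^ 2)) * |y - y'| := by
  have hK : 0 ≤ K := le_trans (abs_nonneg y) hy
  have hfac : abelF a b c x y - abelF a b c x y' =
      (y - y') * ((b + c * Real.cos x) * (y + y') +
        (Real.sin x - a) * (y ^ 2 + y * y' + y' ^ 2)) := by
    simp only [abelF]; ring
  rw [hfac, abs_mul, mul_comm]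
  apply mul_le_mul_of_nonneg_right _ (abs_nonneg _)
  have h1 : |(b + c * Real.cos x) * (y + y')| ≤ (|b| + |c|) * (2 * K) := by
    rw [abs_mul]
    have := abelA_abs b c x
    have h2 : |y + y'| ≤ 2 * K := by
      calc |y + y'| ≤ |y| + |y'| := abs_add_le _ _
        _ ≤ 2 * K := by linarith
    have := abs_nonneg (b + c * Real.cos x)
    nlinarith [abs_nonneg (y + y')]
  have h2 : |(Real.sin x - a) * (y ^ 2 + y * y' + y' ^ 2)| ≤ (1 + |a|) * (3 * K ^ 2) := by
    rw [abs_mul]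
    have hB := abelB_abs a x
    have h3 : |y ^ 2 + y * y' + y' ^ 2| ≤ 3 * K ^ 2 := by
      calc |y ^ 2 + y * y' + y' ^ 2| ≤ |y ^ 2| + |y * y'| + |y' ^ 2| := abs_add_three _ _ _
        _ ≤ 3 * K ^ 2 := by
            rw [abs_mul, abs_pow, abs_pow]
            nlinarith [abs_nonneg y, abs_nonneg y']
    have := abs_nonneg (Real.sin x - a)
    nlinarith [abs_nonneg (y ^ 2 + y * y' + y' ^ 2)]
  calc |(b + c * Real.cos x) * (y + y') + (Real.sin x - a) * (y ^ 2 + y * y' + y' ^ 2)|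
      ≤ |(b + c * Real.cos x) * (y + y')| + |(Real.sin x - a) * (y ^ 2 + y * y' + y' ^ 2)| :=
        abs_add_le _ _
    _ ≤ (|b| + |c|) * (2 * K) + (1 + |a|) * (3 * K ^ 2) := add_le_add h1 h2

noncomputable def abelQ (K y : ℝ) : ℝ := max (-K) (min K y)

lemma abelQ_abs (K y : ℝ) (hK : 0 ≤ K) : |abelQ K y| ≤ K := by
  rw [abs_le, abelQ]
  constructor
  · exact le_max_left _ _
  · exact max_le (by linarith) (min_le_left _ _)

lemma abelQ_eq (K y : ℝ) (hy : |y| ≤ K) : abelQ K y = y := by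
  rw [abs_le] at hy
  rw [abelQ, min_eq_right hy.2, max_eq_right hy.1]

lemma abelQ_lip (K y y' : ℝ) : |abelQ K y - abelQ K y'| ≤ |y - y'| := by
  have h1 : |min K y - min K y'| ≤ |y - y'| :=
    (abs_min_sub_min_le_max _ _ _ _).trans (by simp)
  calc |abelQ K y - abelQ K y'| ≤ max |(-K) - (-K)| |min K y - min K y'| :=
        abs_max_sub_max_le_max _ _ _ _
    _ ≤ |y - y'| := by simpa using h1

noncomputable def abelFt (a b c K : ℝ) (x y : ℝ) : ℝ := abelF a b c x (abelQ K y)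

lemma abelFt_lip_real (a b c K x y y' : ℝ) (hK : 0 ≤ K) :
    |abelFt a b c K x y - abelFt a b c K x y'| ≤
      ((|b| + |c|) * (2 * K) + (1 + |a|) * (3 * K ^ 2)) * |y - y'| := by
  have h1 := abelF_lip a b c K x (abelQ K y) (abelQ K y') (abelQ_abs K y hK) (abelQ_abs K y' hK)
  have h2 := abelQ_lip K y y'
  have hL : 0 ≤ (|b| + |c|) * (2 * K) + (1 + |a|) * (3 * K ^ 2) := by positivity
  calc |abelFt a b c K x y - abelFt a b c K x y'| ≤
        ((|b| + |c|) * (2 * K) + (1 + |a|) * (3 * K ^ 2)) * |abelQ K y - abelQ K y'| := h1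
    _ ≤ _ := by nlinarith

lemma abelFt_lipschitzWith (a b c K : ℝ) (hK : 0 ≤ K) (x : ℝ) :
    LipschitzWith (((|b| + |c|) * (2 * K) + (1 + |a|) * (3 * K ^ 2)).toNNReal)
      (abelFt a b c K x) := by
  apply LipschitzWith.of_dist_le_mul
  intro y y'
  rw [Real.dist_eq, Real.dist_eq, Real.coe_toNNReal _ (by positivity)]
  exact abelFt_lip_real a b c K x y y' hK

lemma abelFt_bound (a b c K x y : ℝ) (hK : 0 ≤ K) :
    |abelFt a b c K x y| ≤ (|b| + |c|) * K ^ 2 + (1 + |a|) * K ^ 3 := by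
  have hq := abelQ_abs K y hK
  have hA := abelA_abs b c x
  have hB := abelB_abs a x
  calc |abelFt a b c K x y| ≤ |(b + c * Real.cos x) * (abelQ K y) ^ 2| +
        |(Real.sin x - a) * (abelQ K y) ^ 3| := abs_add_le _ _
    _ ≤ (|b| + |c|) * K ^ 2 + (1 + |a|) * K ^ 3 := by
        rw [abs_mul, abs_mul, abs_pow, abs_pow]
        have h0 := abs_nonneg (abelQ K y)
        have h1 := abs_nonneg (b + c * Real.cos x)
        have h2 := abs_nonneg (Real.sin x - a)
        have e2 : |abelQ K y| ^ 2 ≤ K ^ 2 := by nlinarith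
        have e3 : |abelQ K y| ^ 3 ≤ K ^ 3 := by nlinarith
        have k2 : (0:ℝ) ≤ K ^ 2 := by positivity
        have k3 : (0:ℝ) ≤ K ^ 3 := by positivity
        have q2 : (0:ℝ) ≤ |abelQ K y| ^ 2 := by positivity
        have q3 : (0:ℝ) ≤ |abelQ K y| ^ 3 := by positivity
        have m2 : |b + c * cos x| * |abelQ K y| ^ 2 ≤ (|b| + |c|) * K ^ 2 :=
          mul_le_mul hA e2 q2 (by positivity)
        have m3 : |sin x - a| * |abelQ K y| ^ 3 ≤ (1 + |a|) * K ^ 3 :=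
          mul_le_mul hB e3 q3 (by positivity)
        linarith

lemma abelFt_cont (a b c K y : ℝ) : Continuous (fun x => abelFt a b c K x y) := by
  unfold abelFt abelF
  fun_prop

/-- Existence of solutions of the clamped equation on `[-1, 2π+1]` via Picard–Lindelöf. -/
lemma abelFt_exists (a b c K z0 : ℝ) (hK : 0 ≤ K) :
    ∃ z : ℝ → ℝ, z 0 = z0 ∧ ∀ x ∈ Set.Icc (0:ℝ) (2 * Real.pi),
      HasDerivAt z (abelFt a b c K x (z x)) x := by
  set C : ℝ := (|b| + |c|) * K ^ 2 + (1 + |a|) * K ^ 3 with hC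
  have hC0 : 0 ≤ C := by positivity
  set R : ℝ := C * (2 * Real.pi + 2) + 1 with hR
  have hpi := Real.pi_gt_three
  have hR0 : (0:ℝ) ≤ R := by positivity
  have hpl : IsPicardLindelof (abelFt a b c K) (tmin := -1) (tmax := 2 * Real.pi + 1)
      ⟨0, by constructor <;> nlinarith⟩ z0 R.toNNReal 0 C.toNNReal
      (((|b| + |c|) * (2 * K) + (1 + |a|) * (3 * K ^ 2)).toNNReal) := by
    constructor
    · intro t _
      exact (abelFt_lipschitzWith a b c K hK t).lipschitzOnWith
    · intro y _
      exact (abelFt_cont a b c K y).continuousOn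
    · intro t _ y _
      rw [Real.coe_toNNReal _ hC0, Real.norm_eq_abs]
      exact abelFt_bound a b c K t y hK
    · have hmax : (2 * Real.pi + 1 - 0) ⊔ (0 - -1 : ℝ) = 2 * Real.pi + 1 := by
        rw [max_eq_left] <;> nlinarith
      simp only [Real.coe_toNNReal _ hC0, Real.coe_toNNReal _ hR0, NNReal.coe_zero, sub_zero]
      rw [max_eq_left (by nlinarith)]
      nlinarith
  obtain ⟨z, hz0, hz⟩ := hpl.exists_eq_forall_mem_Icc_hasDerivWithinAt₀
  refine ⟨z, hz0, fun x hx => ?_⟩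
  have hmem : Set.Icc (-1 : ℝ) (2 * Real.pi + 1) ∈ nhds x := by
    apply Icc_mem_nhds <;> [nlinarith [hx.1]; nlinarith [hx.2]]
  exact (hz x ⟨by nlinarith [hx.1], by nlinarith [hx.2]⟩).hasDerivAt hmem

lemma abelF_eq_ft (a b c K x y : ℝ) (hy : |y| ≤ K) :
    abelF a b c x y = abelFt a b c K x y := by
  rw [abelFt, abelQ_eq K y hy]

lemma abelF_lipOn_tube (a b c M K : ℝ) (ystar : ℝ → ℝ) (hM : ∀ x, |ystar x| ≤ M)
    (hK : M + 1 ≤ K) (hK0 : 0 ≤ K) (t : ℝ) :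
    LipschitzOnWith (((|b| + |c|) * (2 * K) + (1 + |a|) * (3 * K ^ 2)).toNNReal)
      (abelF a b c t) (Metric.closedBall (ystar t) 1) := by
  intro y hy y' hy'
  rw [edist_dist, edist_dist, Metric.mem_closedBall, Real.dist_eq] at *
  have hyK : |y| ≤ K := by
    have := hM t
    have := abs_sub_abs_le_abs_sub y (ystar t)
    linarith
  have hy'K : |y'| ≤ K := by
    have := hM t
    have := abs_sub_abs_le_abs_sub y' (ystar t)
    linarith
  show ENNReal.ofReal _ ≤
    ENNReal.ofReal ((|b| + |c|) * (2 * K) + (1 + |a|) * (3 * K ^ 2)) * ENNReal.ofReal (dist y y')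
  rw [← ENNReal.ofReal_mul (by positivity)]
  apply ENNReal.ofReal_le_ofReal
  rw [Real.dist_eq]
  exact abelF_lip a b c K t y y' hyK hy'K

/-- Tube containment and Grönwall estimate for a solution of the original equation
starting close to the periodic solution. -/
lemma abel_tube (a b c M K δ : ℝ) (ystar z : ℝ → ℝ) (hM : ∀ x, |ystar x| ≤ M)
    (hK : M + 1 ≤ K) (hK0 : 0 ≤ K)
    (hystar : ∀ x : ℝ, HasDerivAt ystar (abelF a b c x (ystar x)) x)
    (hz : ∀ x ∈ Set.Icc (0:ℝ) (2 * Real.pi), HasDerivAt z (abelF a b c x (z x)) x)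
    (hδ0 : |z 0 - ystar 0| ≤ δ)
    (hδ1 : δ * Real.exp (((|b| + |c|) * (2 * K) + (1 + |a|) * (3 * K ^ 2)) * (2 * Real.pi)) < 1) :
    ∀ t ∈ Set.Icc (0:ℝ) (2 * Real.pi),
      |z t - ystar t| ≤ δ * Real.exp (((|b| + |c|) * (2 * K) + (1 + |a|) * (3 * K ^ 2)) * t) := by
  set L : ℝ := (|b| + |c|) * (2 * K) + (1 + |a|) * (3 * K ^ 2) with hLdef
  have hL0 : 0 ≤ L := by positivity
  have hpi : (0:ℝ) < 2 * Real.pi := by positivity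
  have hδnn : 0 ≤ δ := le_trans (abs_nonneg _) hδ0
  have hexp1 : (1:ℝ) ≤ Real.exp (L * (2 * Real.pi)) := by
    rw [← Real.exp_zero]
    exact Real.exp_le_exp.mpr (by positivity)
  have hδlt1 : δ < 1 := by nlinarith
  have hzc : ContinuousOn z (Set.Icc (0:ℝ) (2 * Real.pi)) :=
    fun x hx => (hz x hx).continuousAt.continuousWithinAt
  have hyc : Continuous ystar :=
    continuous_iff_continuousAt.mpr fun x => (hystar x).continuousAt
  have hv := abelF_lipOn_tube a b c M K ystar hM hK hK0
  -- Step 1: the solution stays in the tube of radius 1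
  have claim1 : ∀ t ∈ Set.Icc (0:ℝ) (2 * Real.pi), |z t - ystar t| < 1 := by
    by_contra hcon
    push_neg at hcon
    obtain ⟨t₀, ht₀, ht₀1⟩ := hcon
    set Bad : Set ℝ := Set.Icc (0:ℝ) (2 * Real.pi) ∩ {t | 1 ≤ |z t - ystar t|} with hBad
    have hBadne : Bad.Nonempty := ⟨t₀, ht₀, ht₀1⟩
    have hBadclosed : IsClosed Bad := by
      apply ContinuousOn.preimage_isClosed_of_isClosed
        ((hzc.sub hyc.continuousOn).abs) isClosed_Icc isClosed_Ici
    have hBadbdd : BddBelow Bad := ⟨0, fun t ht => ht.1.1⟩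
    set x₁ : ℝ := sInf Bad with hx₁def
    have hx₁mem : x₁ ∈ Bad := hBadclosed.csInf_mem hBadne hBadbdd
    have hx₁Icc : x₁ ∈ Set.Icc (0:ℝ) (2 * Real.pi) := hx₁mem.1
    have hx₁1 : 1 ≤ |z x₁ - ystar x₁| := hx₁mem.2
    have hx₁pos : 0 < x₁ := by
      rcases lt_or_eq_of_le hx₁Icc.1 with h | h
      · exact h
      · exfalso; rw [← h] at hx₁1; linarith [hδ0, hδlt1]
    have hsmall : ∀ t ∈ Set.Ico (0:ℝ) x₁, |z t - ystar t| < 1 := by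
      intro t ht
      by_contra hge
      push_neg at hge
      have : t ∈ Bad := ⟨⟨ht.1, le_trans ht.2.le hx₁Icc.2⟩, hge⟩
      exact absurd (csInf_le hBadbdd this) (not_le.mpr ht.2)
    have hgron := dist_le_of_trajectories_ODE_of_mem (δ := δ) (fun t _ => hv t)
      (hzc.mono (Set.Icc_subset_Icc_right hx₁Icc.2))
      (fun t ht => (hz t ⟨ht.1, le_trans ht.2.le hx₁Icc.2⟩).hasDerivWithinAt)
      (fun t ht => by
        rw [Metric.mem_closedBall, Real.dist_eq]
        exact (hsmall t ht).le)
      (hyc.continuousOn)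
      (fun t ht => (hystar t).hasDerivWithinAt)
      (fun t ht => by rw [Metric.mem_closedBall, Real.dist_eq]; simp)
      (by rw [Real.dist_eq]; exact hδ0) x₁ ⟨hx₁Icc.1, le_refl x₁⟩
    rw [Real.dist_eq] at hgron
    have hLx : Real.exp ((((|b| + |c|) * (2 * K) + (1 + |a|) * (3 * K ^ 2)).toNNReal : ℝ)
        * (x₁ - 0)) ≤ Real.exp (L * (2 * Real.pi)) := by
      apply Real.exp_le_exp.mpr
      rw [Real.coe_toNNReal _ (by positivity)]
      have := hx₁Icc.2
      nlinarith
    nlinarith [hgron, hLx, Real.exp_pos ((((|b| + |c|) * (2 * K) + (1 + |a|) * (3 * K ^ 2)).toNNReal : ℝ) * (x₁ - 0))]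
  -- Step 2: full Grönwall estimate
  intro t ht
  have hgron := dist_le_of_trajectories_ODE_of_mem (δ := δ) (fun t _ => hv t) hzc
    (fun s hs => (hz s ⟨hs.1, hs.2.le⟩).hasDerivWithinAt)
    (fun s hs => by
      rw [Metric.mem_closedBall, Real.dist_eq]
      exact (claim1 s ⟨hs.1, hs.2.le⟩).le)
    (hyc.continuousOn)
    (fun s hs => (hystar s).hasDerivWithinAt)
    (fun s hs => by rw [Metric.mem_closedBall, Real.dist_eq]; simp)
    (by rw [Real.dist_eq]; exact hδ0) t ht
  rw [Real.dist_eq] at hgron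
  rw [Real.coe_toNNReal _ (by positivity), sub_zero] at hgron
  exact hgron

/-- A solution starting off the periodic solution never meets it (backward uniqueness). -/
lemma abel_ne (a b c M K : ℝ) (ystar z : ℝ → ℝ) (hM : ∀ x, |ystar x| ≤ M)
    (hK : M + 1 ≤ K) (hK0 : 0 ≤ K)
    (hystar : ∀ x : ℝ, HasDerivAt ystar (abelF a b c x (ystar x)) x)
    (hz : ∀ x ∈ Set.Icc (0:ℝ) (2 * Real.pi), HasDerivAt z (abelF a b c x (z x)) x)
    (htube : ∀ t ∈ Set.Icc (0:ℝ) (2 * Real.pi), |z t - ystar t| ≤ 1)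
    (hne : z 0 ≠ ystar 0) :
    ∀ t ∈ Set.Icc (0:ℝ) (2 * Real.pi), z t ≠ ystar t := by
  intro x₁ hx₁ heq
  have hyc : Continuous ystar :=
    continuous_iff_continuousAt.mpr fun x => (hystar x).continuousAt
  have hzc : ContinuousOn z (Set.Icc (0:ℝ) (2 * Real.pi)) :=
    fun x hx => (hz x hx).continuousAt.continuousWithinAt
  have hv := abelF_lipOn_tube a b c M K ystar hM hK hK0
  have huniq := ODE_solution_unique_of_mem_Icc_left (a := 0) (b := x₁) (fun t _ => hv t)
    (hzc.mono (Set.Icc_subset_Icc_right hx₁.2))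
    (fun t ht => (hz t ⟨ht.1.le, le_trans ht.2 hx₁.2⟩).hasDerivWithinAt)
    (fun t ht => by
      rw [Metric.mem_closedBall, Real.dist_eq]
      exact htube t ⟨ht.1.le, le_trans ht.2 hx₁.2⟩)
    (hyc.continuousOn)
    (fun t ht => (hystar t).hasDerivWithinAt)
    (fun t ht => by rw [Metric.mem_closedBall, Real.dist_eq]; simp)
    heq
  exact hne (huniq ⟨le_refl 0, hx₁.1⟩)

set_option maxHeartbeats 1600000 in
lemma abel_key (a b c M K I δ : ℝ) (ystar z : ℝ → ℝ)
    (hM : ∀ x, |ystar x| ≤ M) (hM0 : 0 ≤ M) (hK : M + 1 ≤ K) (hK0 : 0 ≤ K)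
    (hystar : ∀ x : ℝ, HasDerivAt ystar (abelF a b c x (ystar x)) x)
    (hz : ∀ x ∈ Set.Icc (0:ℝ) (2 * Real.pi), HasDerivAt z (abelF a b c x (z x)) x)
    (hI : I = ∫ x in (0:ℝ)..(2 * Real.pi),
      (2 * (b + c * Real.cos x) * ystar x + 3 * (Real.sin x - a) * (ystar x) ^ 2))
    (hδ0 : |z 0 - ystar 0| < δ)
    (hδ1 : δ * Real.exp (((|b| + |c|) * (2 * K) + (1 + |a|) * (3 * K ^ 2)) * (2 * Real.pi)) ≤ 1/2)
    (hδ2 : 2 * Real.pi * (((|b| + |c|) + (1 + |a|) * (1 + 3 * M)) *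
      (δ * Real.exp (((|b| + |c|) * (2 * K) + (1 + |a|) * (3 * K ^ 2)) * (2 * Real.pi)))) < |I|)
    (hne : z 0 ≠ ystar 0)
    (hper0 : ystar (2 * Real.pi) = ystar 0) :
    ∃ r : ℝ, |r - I| < |I| ∧
      (ystar 0 < z 0 → z (2 * Real.pi) - ystar 0 = (z 0 - ystar 0) * Real.exp r) ∧
      (z 0 < ystar 0 → ystar 0 - z (2 * Real.pi) = (ystar 0 - z 0) * Real.exp r) := by
  set L : ℝ := (|b| + |c|) * (2 * K) + (1 + |a|) * (3 * K ^ 2) with hLdef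
  set EE : ℝ := Real.exp (L * (2 * Real.pi)) with hEEdef
  set C1 : ℝ := (|b| + |c|) + (1 + |a|) * (1 + 3 * M) with hC1def
  have hL0 : 0 ≤ L := by positivity
  have hEE1 : (1:ℝ) ≤ EE := by
    rw [hEEdef, ← Real.exp_zero]
    exact Real.exp_le_exp.mpr (by positivity)
  have hpi : (0:ℝ) < 2 * Real.pi := by positivity
  have hδpos : 0 ≤ δ := le_trans (abs_nonneg _) hδ0.le
  have htube := abel_tube a b c M K δ ystar z hM hK hK0 hystar hz hδ0.le (by
    rw [← hLdef, ← hEEdef]; linarith)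
  have hvb : ∀ t ∈ Set.Icc (0:ℝ) (2 * Real.pi), |z t - ystar t| ≤ δ * EE := by
    intro t ht
    refine le_trans (htube t ht) ?_
    have : Real.exp (L * t) ≤ EE := Real.exp_le_exp.mpr (by nlinarith [ht.1, ht.2])
    nlinarith
  have hδEE : δ * EE ≤ 1/2 := hδ1
  have hne2 := abel_ne a b c M K ystar z hM hK hK0 hystar hz
    (fun t ht => le_trans (hvb t ht) (by linarith)) hne
  have hyc : Continuous ystar :=
    continuous_iff_continuousAt.mpr fun x => (hystar x).continuousAt
  have hzc : ContinuousOn z (Set.Icc (0:ℝ) (2 * Real.pi)) :=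
    fun x hx => (hz x hx).continuousAt.continuousWithinAt
  -- the logarithmic derivative
  set h : ℝ → ℝ := fun t => (b + c * Real.cos t) * (z t + ystar t) +
    (Real.sin t - a) * ((z t) ^ 2 + z t * ystar t + (ystar t) ^ 2) with hhdef
  set α : ℝ → ℝ := fun t => 2 * (b + c * Real.cos t) * ystar t +
    3 * (Real.sin t - a) * (ystar t) ^ 2 with hαdef
  have hhc : ContinuousOn h (Set.Icc (0:ℝ) (2 * Real.pi)) := by
    apply ContinuousOn.add
    · exact ((continuous_const.add (continuous_const.mul Real.continuous_cos)).continuousOn).mul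
        (hzc.add hyc.continuousOn)
    · exact ((Real.continuous_sin.sub continuous_const).continuousOn).mul
        (((hzc.pow 2).add (hzc.mul hyc.continuousOn)).add ((hyc.continuousOn).pow 2))
  have hαc : Continuous α := by
    rw [hαdef]; fun_prop
  set r : ℝ := ∫ t in (0:ℝ)..(2 * Real.pi), h t with hrdef
  have huIcc : Set.uIcc (0:ℝ) (2 * Real.pi) = Set.Icc (0:ℝ) (2 * Real.pi) :=
    Set.uIcc_of_le hpi.le
  have hint_h : IntervalIntegrable h MeasureTheory.volume 0 (2 * Real.pi) := by
    apply ContinuousOn.intervalIntegrable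
    rwa [huIcc]
  have hint_α : IntervalIntegrable α MeasureTheory.volume 0 (2 * Real.pi) :=
    hαc.intervalIntegrable _ _
  -- bound |r - I|
  have hrI : |r - I| ≤ 2 * Real.pi * (C1 * (δ * EE)) := by
    have hsub : r - I = ∫ t in (0:ℝ)..(2 * Real.pi), (h t - α t) := by
      rw [hrdef, hI, intervalIntegral.integral_sub hint_h hint_α]
    rw [hsub]
    have hbound : ∀ t ∈ Set.uIoc (0:ℝ) (2 * Real.pi), ‖h t - α t‖ ≤ C1 * (δ * EE) := by
      intro t ht
      rw [Set.uIoc_of_le hpi.le] at ht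
      have htIcc : t ∈ Set.Icc (0:ℝ) (2 * Real.pi) := ⟨ht.1.le, ht.2⟩
      have hv1 : |z t - ystar t| ≤ δ * EE := hvb t htIcc
      have hv2 : |z t - ystar t| ≤ 1 := le_trans hv1 (by linarith)
      have hfac : h t - α t = (b + c * Real.cos t) * (z t - ystar t) +
          (Real.sin t - a) * ((z t - ystar t) * ((z t - ystar t) + 3 * ystar t)) := by
        rw [hhdef, hαdef]; ring
      rw [Real.norm_eq_abs, hfac]
      have hA := abelA_abs b c t
      have hB := abelB_abs a t
      have hy3 : |(z t - ystar t) + 3 * ystar t| ≤ |z t - ystar t| + 3 * M := by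
        calc |(z t - ystar t) + 3 * ystar t| ≤ |z t - ystar t| + |3 * ystar t| := abs_add_le _ _
          _ ≤ _ := by rw [abs_mul]; simp only [abs_of_pos (by norm_num : (0:ℝ) < 3)]
                      nlinarith [hM t]
      calc |(b + c * Real.cos t) * (z t - ystar t) +
            (Real.sin t - a) * ((z t - ystar t) * ((z t - ystar t) + 3 * ystar t))|
          ≤ |(b + c * Real.cos t) * (z t - ystar t)| +
            |(Real.sin t - a) * ((z t - ystar t) * ((z t - ystar t) + 3 * ystar t))| := abs_add_le _ _
        _ = |b + c * Real.cos t| * |z t - ystar t| +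
            |Real.sin t - a| * (|z t - ystar t| * |(z t - ystar t) + 3 * ystar t|) := by
            rw [abs_mul, abs_mul, abs_mul]
        _ ≤ C1 * (δ * EE) := by
            rw [hC1def]
            have h0 := abs_nonneg (z t - ystar t)
            have h1 := abs_nonneg (b + c * Real.cos t)
            have h2 := abs_nonneg (Real.sin t - a)
            have h3 := abs_nonneg ((z t - ystar t) + 3 * ystar t)
            have hδEE0 : 0 ≤ δ * EE := le_trans h0 hv1
            have hw : |(z t - ystar t) + 3 * ystar t| ≤ 1 + 3 * M := by linarith
            have m1 : |b + c * Real.cos t| * |z t - ystar t| ≤ (|b| + |c|) * (δ * EE) :=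
              mul_le_mul hA hv1 h0 (by positivity)
            have minner : |z t - ystar t| * |(z t - ystar t) + 3 * ystar t| ≤
                (δ * EE) * (1 + 3 * M) := mul_le_mul hv1 hw h3 hδEE0
            have m2 : |Real.sin t - a| * (|z t - ystar t| * |(z t - ystar t) + 3 * ystar t|) ≤
                (1 + |a|) * ((δ * EE) * (1 + 3 * M)) :=
              mul_le_mul hB minner (by positivity) (by positivity)
            nlinarith [m1, m2]
    have := intervalIntegral.norm_integral_le_of_norm_le_const hbound
    rw [Real.norm_eq_abs] at this
    calc |∫ t in (0:ℝ)..(2 * Real.pi), (h t - α t)| ≤ C1 * (δ * EE) * |2 * Real.pi - 0| := this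
      _ = 2 * Real.pi * (C1 * (δ * EE)) := by
          rw [sub_zero, abs_of_pos hpi]; ring
  refine ⟨r, lt_of_le_of_lt hrI hδ2, ?_, ?_⟩
  · -- z above ystar
    intro hpos
    have hvpos : ∀ t ∈ Set.Icc (0:ℝ) (2 * Real.pi), 0 < z t - ystar t := by
      intro t ht
      rcases lt_trichotomy (z t - ystar t) 0 with hlt | heq | hgt
      · exfalso
        have hcont : ContinuousOn (fun s => z s - ystar s) (Set.Icc 0 t) :=
          (hzc.mono (Set.Icc_subset_Icc_right ht.2)).sub (hyc.continuousOn)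
        have := intermediate_value_Icc' ht.1 hcont (a := 0) (b := t)
        have h0mem : (0:ℝ) ∈ Set.Icc (z t - ystar t) (z 0 - ystar 0) :=
          ⟨hlt.le, by linarith⟩
        obtain ⟨s, hs, hseq⟩ := this h0mem
        exact hne2 s ⟨hs.1, le_trans hs.2 ht.2⟩ (by linarith [hseq, sub_eq_zero.mp hseq])
      · exact absurd (sub_eq_zero.mp heq) (hne2 t ht)
      · exact hgt
    have hderiv : ∀ t ∈ Set.Icc (0:ℝ) (2 * Real.pi),
        HasDerivAt (fun s => Real.log (z s - ystar s)) (h t) t := by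
      intro t ht
      have hv' : HasDerivAt (fun s => z s - ystar s) ((z t - ystar t) * h t) t := by
        have := (hz t ht).sub (hystar t)
        refine this.congr_deriv ?_
        rw [hhdef, abelF, abelF]; ring
      have := hv'.log (ne_of_gt (hvpos t ht))
      rwa [mul_div_cancel_left₀ _ (ne_of_gt (hvpos t ht))] at this
    have hftc := intervalIntegral.integral_eq_sub_of_hasDerivAt
      (f := fun s => Real.log (z s - ystar s)) (f' := h)
      (fun t ht => hderiv t (huIcc ▸ ht)) hint_h
    have hv0 : 0 < z 0 - ystar 0 := sub_pos.mpr hpos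
    have hv2π : 0 < z (2 * Real.pi) - ystar (2 * Real.pi) :=
      hvpos _ ⟨hpi.le, le_refl _⟩
    have hlog : Real.log (z (2 * Real.pi) - ystar (2 * Real.pi)) =
        Real.log (z 0 - ystar 0) + r := by
      have : r = Real.log (z (2 * Real.pi) - ystar (2 * Real.pi)) -
          Real.log (z 0 - ystar 0) := hftc
      linarith
    have hexp := Real.exp_log hv2π
    rw [hlog, Real.exp_add, Real.exp_log hv0] at hexp
    rw [hper0] at hexp
    linarith [hexp]
  · intro hneg
    have hvpos : ∀ t ∈ Set.Icc (0:ℝ) (2 * Real.pi), 0 < ystar t - z t := by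
      intro t ht
      rcases lt_trichotomy (ystar t - z t) 0 with hlt | heq | hgt
      · exfalso
        have hcont : ContinuousOn (fun s => ystar s - z s) (Set.Icc 0 t) :=
          (hyc.continuousOn).sub (hzc.mono (Set.Icc_subset_Icc_right ht.2))
        have := intermediate_value_Icc' ht.1 hcont (a := 0) (b := t)
        have h0mem : (0:ℝ) ∈ Set.Icc (ystar t - z t) (ystar 0 - z 0) :=
          ⟨hlt.le, by linarith⟩
        obtain ⟨s, hs, hseq⟩ := this h0mem
        exact hne2 s ⟨hs.1, le_trans hs.2 ht.2⟩ (by linarith [sub_eq_zero.mp hseq])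
      · exact absurd (sub_eq_zero.mp heq).symm (hne2 t ht)
      · exact hgt
    have hderiv : ∀ t ∈ Set.Icc (0:ℝ) (2 * Real.pi),
        HasDerivAt (fun s => Real.log (ystar s - z s)) (h t) t := by
      intro t ht
      have hv' : HasDerivAt (fun s => ystar s - z s) ((ystar t - z t) * h t) t := by
        have := (hystar t).sub (hz t ht)
        refine this.congr_deriv ?_
        rw [hhdef, abelF, abelF]; ring
      have := hv'.log (ne_of_gt (hvpos t ht))
      rwa [mul_div_cancel_left₀ _ (ne_of_gt (hvpos t ht))] at this
    have hftc := intervalIntegral.integral_eq_sub_of_hasDerivAt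
      (f := fun s => Real.log (ystar s - z s)) (f' := h)
      (fun t ht => hderiv t (huIcc ▸ ht)) hint_h
    have hv0 : 0 < ystar 0 - z 0 := sub_pos.mpr hneg
    have hv2π : 0 < ystar (2 * Real.pi) - z (2 * Real.pi) :=
      hvpos _ ⟨hpi.le, le_refl _⟩
    have hlog : Real.log (ystar (2 * Real.pi) - z (2 * Real.pi)) =
        Real.log (ystar 0 - z 0) + r := by
      have : r = Real.log (ystar (2 * Real.pi) - z (2 * Real.pi)) -
          Real.log (ystar 0 - z 0) := hftc
      linarith
    have hexp := Real.exp_log hv2π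
    rw [hlog, Real.exp_add, Real.exp_log hv0] at hexp
    rw [hper0] at hexp
    linarith [hexp]

/-- Existence of a solution of the original equation on `[0,2π]` for initial data near the
periodic solution, via the clamped equation. -/
lemma abel_exists (a b c M K δ : ℝ) (ystar : ℝ → ℝ) (z0 : ℝ)
    (hM : ∀ x, |ystar x| ≤ M) (hK : M + 1 ≤ K) (hK0 : 0 ≤ K)
    (hystar : ∀ x : ℝ, HasDerivAt ystar (abelF a b c x (ystar x)) x)
    (hz0 : |z0 - ystar 0| ≤ δ)
    (hδ1 : δ * Real.exp (((|b| + |c|) * (2 * K) + (1 + |a|) * (3 * K ^ 2)) * (2 * Real.pi)) ≤ 1/2) :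
    ∃ z : ℝ → ℝ, z 0 = z0 ∧ ∀ x ∈ Set.Icc (0:ℝ) (2 * Real.pi),
      HasDerivAt z (abelF a b c x (z x)) x := by
  set L : ℝ := (|b| + |c|) * (2 * K) + (1 + |a|) * (3 * K ^ 2) with hLdef
  have hL0 : 0 ≤ L := by positivity
  have hpi : (0:ℝ) < 2 * Real.pi := by positivity
  have hδpos : 0 ≤ δ := le_trans (abs_nonneg _) hz0
  obtain ⟨z, hz0', hz⟩ := abelFt_exists a b c K z0 hK0
  have hyc : Continuous ystar :=
    continuous_iff_continuousAt.mpr fun x => (hystar x).continuousAt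
  have hzc : ContinuousOn z (Set.Icc (0:ℝ) (2 * Real.pi)) :=
    fun x hx => (hz x hx).continuousAt.continuousWithinAt
  have hyft : ∀ x : ℝ, HasDerivAt ystar (abelFt a b c K x (ystar x)) x := by
    intro x
    rw [← abelF_eq_ft a b c K x (ystar x) (le_trans (hM x) (by linarith))]
    exact hystar x
  have hgron := dist_le_of_trajectories_ODE (δ := δ)
    (v := abelFt a b c K) (a := 0) (b := 2 * Real.pi)
    (fun t => abelFt_lipschitzWith a b c K hK0 t)
    hzc
    (fun t ht => (hz t ⟨ht.1, ht.2.le⟩).hasDerivWithinAt)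
    (hyc.continuousOn)
    (fun t ht => (hyft t).hasDerivWithinAt)
    (by rw [Real.dist_eq, hz0']; exact hz0)
  have htube : ∀ t ∈ Set.Icc (0:ℝ) (2 * Real.pi), |z t - ystar t| ≤ 1/2 := by
    intro t ht
    have := hgron t ht
    rw [Real.dist_eq, Real.coe_toNNReal _ (by positivity), sub_zero] at this
    have hexp : Real.exp (L * t) ≤ Real.exp (L * (2 * Real.pi)) :=
      Real.exp_le_exp.mpr (by nlinarith [ht.1, ht.2])
    have hexp0 := Real.exp_pos (L * t)
    nlinarith
  refine ⟨z, hz0', fun x hx => ?_⟩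
  have hzK : |z x| ≤ K := by
    have h1 := htube x hx
    have h2 := hM x
    have h3 := abs_sub_abs_le_abs_sub (z x) (ystar x)
    linarith
  rw [abelF_eq_ft a b c K x (z x) hzK]
  exact hz x hx

/-- A continuous `2π`-periodic function is globally bounded. -/
lemma abel_bound (ystar : ℝ → ℝ) (hyc : Continuous ystar)
    (hper : ∀ x : ℝ, ystar (x + 2 * Real.pi) = ystar x) :
    ∃ M : ℝ, 0 ≤ M ∧ ∀ x, |ystar x| ≤ M := by
  obtain ⟨C, hC⟩ := (isCompact_Icc (a := (0:ℝ)) (b := 2 * Real.pi)).exists_bound_of_continuousOn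
    hyc.continuousOn
  have hperiodic : Function.Periodic ystar (2 * Real.pi) := hper
  refine ⟨C, le_trans (abs_nonneg _) (by simpa using hC 0 ⟨le_refl 0, by positivity⟩), fun x => ?_⟩
  obtain ⟨y, hy, hxy⟩ := hperiodic.exists_mem_Ico₀ (by positivity) x
  rw [hxy]
  simpa using hC y ⟨hy.1, hy.2.le⟩

set_option maxHeartbeats 1600000 in
/-- Stability criterion via the first derivative of the Poincaré map: for a
2π-periodic solution `y*` of the Abel equation
`y′ = (b + c·cos x)·y² + (sin x − a)·y³`, if
`∫₀^{2π}(2(b + c·cos x)·y* + 3(sin x − a)·y*²) dx > 0` then `y*` is unstable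
(nearby solutions above it move up over one period, those below move down),
and if the integral is `< 0` then `y*` is stable (the inequalities reverse). -/
theorem abel_periodic_solution_stability_criterion
    (a b c : ℝ) (ystar : ℝ → ℝ)
    (hsol : ∀ x : ℝ, HasDerivAt ystar
      ((b + c * Real.cos x) * (ystar x) ^ 2 + (Real.sin x - a) * (ystar x) ^ 3) x)
    (hper : ∀ x : ℝ, ystar (x + 2 * Real.pi) = ystar x) :
    ((0 < ∫ x in (0:ℝ)..(2 * Real.pi),
        (2 * (b + c * Real.cos x) * ystar x + 3 * (Real.sin x - a) * (ystar x) ^ 2)) →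
      ∃ δ > 0,
        (∀ z0 ∈ Set.Ioo (ystar 0 - δ) (ystar 0 + δ), z0 ≠ ystar 0 →
          ∃ z : ℝ → ℝ, z 0 = z0 ∧ ∀ x ∈ Set.Icc (0:ℝ) (2 * Real.pi),
            HasDerivAt z
              ((b + c * Real.cos x) * (z x) ^ 2 + (Real.sin x - a) * (z x) ^ 3) x) ∧
        (∀ z : ℝ → ℝ,
          (∀ x ∈ Set.Icc (0:ℝ) (2 * Real.pi), HasDerivAt z
            ((b + c * Real.cos x) * (z x) ^ 2 + (Real.sin x - a) * (z x) ^ 3) x) →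
          (z 0 ∈ Set.Ioo (ystar 0) (ystar 0 + δ) → z 0 < z (2 * Real.pi)) ∧
          (z 0 ∈ Set.Ioo (ystar 0 - δ) (ystar 0) → z (2 * Real.pi) < z 0))) ∧
    (((∫ x in (0:ℝ)..(2 * Real.pi),
        (2 * (b + c * Real.cos x) * ystar x + 3 * (Real.sin x - a) * (ystar x) ^ 2)) < 0) →
      ∃ δ > 0,
        (∀ z0 ∈ Set.Ioo (ystar 0 - δ) (ystar 0 + δ), z0 ≠ ystar 0 →
          ∃ z : ℝ → ℝ, z 0 = z0 ∧ ∀ x ∈ Set.Icc (0:ℝ) (2 * Real.pi),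
            HasDerivAt z
              ((b + c * Real.cos x) * (z x) ^ 2 + (Real.sin x - a) * (z x) ^ 3) x) ∧
        (∀ z : ℝ → ℝ,
          (∀ x ∈ Set.Icc (0:ℝ) (2 * Real.pi), HasDerivAt z
            ((b + c * Real.cos x) * (z x) ^ 2 + (Real.sin x - a) * (z x) ^ 3) x) →
          (z 0 ∈ Set.Ioo (ystar 0) (ystar 0 + δ) → z (2 * Real.pi) < z 0) ∧
          (z 0 ∈ Set.Ioo (ystar 0 - δ) (ystar 0) → z 0 < z (2 * Real.pi)))) := by
  have hystar : ∀ x : ℝ, HasDerivAt ystar (abelF a b c x (ystar x)) x := by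
    intro x; simpa [abelF] using hsol x
  have hyc : Continuous ystar :=
    continuous_iff_continuousAt.mpr fun x => (hystar x).continuousAt
  obtain ⟨M, hM0, hM⟩ := abel_bound ystar hyc hper
  set K : ℝ := M + 2 with hKdef
  have hK : M + 1 ≤ K := by linarith
  have hK0 : (0:ℝ) ≤ K := by linarith
  set L : ℝ := (|b| + |c|) * (2 * K) + (1 + |a|) * (3 * K ^ 2) with hLdef
  set EE : ℝ := Real.exp (L * (2 * Real.pi)) with hEEdef
  set C1 : ℝ := (|b| + |c|) + (1 + |a|) * (1 + 3 * M) with hC1def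
  have hEEpos : 0 < EE := Real.exp_pos _
  have hC1pos : 0 < C1 := by
    have h1 := abs_nonneg a
    have h2 := abs_nonneg b
    have h3 := abs_nonneg c
    nlinarith
  have hpi := Real.pi_pos
  set I : ℝ := ∫ x in (0:ℝ)..(2 * Real.pi),
    (2 * (b + c * Real.cos x) * ystar x + 3 * (Real.sin x - a) * (ystar x) ^ 2) with hIdef
  have hper0 : ystar (2 * Real.pi) = ystar 0 := by
    have := hper 0; rwa [zero_add] at this
  have main : ∀ hIne : I ≠ 0, ∃ δ > 0,
      (∀ z0 ∈ Set.Ioo (ystar 0 - δ) (ystar 0 + δ), z0 ≠ ystar 0 →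
        ∃ z : ℝ → ℝ, z 0 = z0 ∧ ∀ x ∈ Set.Icc (0:ℝ) (2 * Real.pi),
          HasDerivAt z
            ((b + c * Real.cos x) * (z x) ^ 2 + (Real.sin x - a) * (z x) ^ 3) x) ∧
      (∀ z : ℝ → ℝ,
        (∀ x ∈ Set.Icc (0:ℝ) (2 * Real.pi), HasDerivAt z
          ((b + c * Real.cos x) * (z x) ^ 2 + (Real.sin x - a) * (z x) ^ 3) x) →
        ∃ r : ℝ, |r - I| < |I| ∧
          (ystar 0 < z 0 ∧ z 0 < ystar 0 + δ →
            z (2 * Real.pi) - ystar 0 = (z 0 - ystar 0) * Real.exp r) ∧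
          (ystar 0 - δ < z 0 ∧ z 0 < ystar 0 →
            ystar 0 - z (2 * Real.pi) = (ystar 0 - z 0) * Real.exp r)) := by
    intro hIne
    have hIabs : 0 < |I| := abs_pos.mpr hIne
    set δ : ℝ := min (1 / (2 * EE)) (|I| / (4 * Real.pi * C1 * EE + 1)) with hδdef
    have hDpos : 0 < 4 * Real.pi * C1 * EE + 1 := by positivity
    have hδpos : 0 < δ := lt_min (by positivity) (by positivity)
    have hδ1 : δ * EE ≤ 1 / 2 := by
      have h1 : δ ≤ 1 / (2 * EE) := min_le_left _ _
      rw [le_div_iff₀ (by positivity)] at h1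
      nlinarith
    have hδ2 : 2 * Real.pi * (C1 * (δ * EE)) < |I| := by
      have h1 : δ ≤ |I| / (4 * Real.pi * C1 * EE + 1) := min_le_right _ _
      rw [le_div_iff₀ hDpos] at h1
      nlinarith [mul_pos (mul_pos (mul_pos hpi hC1pos) hEEpos) hδpos]
    refine ⟨δ, hδpos, ?_, ?_⟩
    · intro z0 hz0 _
      have habs : |z0 - ystar 0| ≤ δ :=
        (abs_sub_lt_iff.mpr ⟨by linarith [hz0.2], by linarith [hz0.1]⟩).le
      obtain ⟨z, hzz0, hz⟩ := abel_exists a b c M K δ ystar z0 hM hK hK0 hystar habs hδ1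
      exact ⟨z, hzz0, fun x hx => by simpa [abelF] using hz x hx⟩
    · intro z hz
      by_cases hclose : |z 0 - ystar 0| < δ ∧ z 0 ≠ ystar 0
      · have hz' : ∀ x ∈ Set.Icc (0:ℝ) (2 * Real.pi),
            HasDerivAt z (abelF a b c x (z x)) x :=
          fun x hx => by simpa [abelF] using hz x hx
        obtain ⟨r, hrI, hup, hdown⟩ := abel_key a b c M K I δ ystar z hM hM0 hK hK0
          hystar hz' hIdef hclose.1 hδ1 hδ2 hclose.2 hper0
        exact ⟨r, hrI, fun h => hup h.1, fun h => hdown h.2⟩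
      · refine ⟨I, by simpa using hIabs, fun h => absurd ?_ hclose, fun h => absurd ?_ hclose⟩
        · exact ⟨abs_sub_lt_iff.mpr ⟨by linarith [h.2], by linarith [h.1]⟩,
            fun he => by rw [he] at h; exact lt_irrefl _ h.1⟩
        · exact ⟨abs_sub_lt_iff.mpr ⟨by linarith [h.2], by linarith [h.1]⟩,
            fun he => by rw [he] at h; exact lt_irrefl _ h.2⟩
  constructor
  · intro hIpos
    obtain ⟨δ, hδpos, hex, hst⟩ := main (ne_of_gt hIpos)
    refine ⟨δ, hδpos, hex, fun z hz => ?_⟩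
    obtain ⟨r, hrI, hup, hdown⟩ := hst z hz
    rw [abs_of_pos hIpos] at hrI
    have hr : 0 < r := by
      have := abs_lt.mp hrI
      linarith [this.1]
    have hexp : 1 < Real.exp r := by
      rw [← Real.exp_zero]
      exact Real.exp_lt_exp.mpr hr
    constructor
    · intro h0
      have heq := hup ⟨h0.1, h0.2⟩
      nlinarith [sub_pos.mpr h0.1]
    · intro h0
      have heq := hdown ⟨h0.1, h0.2⟩
      nlinarith [sub_pos.mpr h0.2]
  · intro hIneg
    obtain ⟨δ, hδpos, hex, hst⟩ := main (ne_of_lt hIneg)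
    refine ⟨δ, hδpos, hex, fun z hz => ?_⟩
    obtain ⟨r, hrI, hup, hdown⟩ := hst z hz
    rw [abs_of_neg hIneg] at hrI
    have hr : r < 0 := by
      have := abs_lt.mp hrI
      linarith [this.2]
    have hexp : Real.exp r < 1 := by
      rw [← Real.exp_zero]
      exact Real.exp_lt_exp.mpr hr
    have hexp0 := Real.exp_pos r
    constructor
    · intro h0
      have heq := hup ⟨h0.1, h0.2⟩
      nlinarith [sub_pos.mpr h0.1]
    · intro h0
      have heq := hdown ⟨h0.1, h0.2⟩
      nlinarith [sub_pos.mpr h0.2]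
end

section
/- Let 0 < a < 1, c < 0 and 0 < b < −c·√(1 − a²). Then the Abel equation (E) has at most one limit cycle in the region y > 0 and at most one limit cycle in the region y < 0: there do not exist two distinct 2π-periodic solutions of (E), both everywhere positive (respectively both everywhere negative), each of which is isolated among 2π-periodic solutions. -/
open Real

/-- `y` is a 2π-periodic solution of the Abel equation
`y′ = (b + c·cos x)·y² + (sin x − a)·y³`. -/
def IsAbelPeriodicSolution (a b c : ℝ) (y : ℝ → ℝ) : Prop :=
  (∀ x : ℝ, HasDerivAt y
    ((b + c * Real.cos x) * (y x) ^ 2 + (Real.sin x - a) * (y x) ^ 3) x) ∧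
  (∀ x : ℝ, y (x + 2 * Real.pi) = y x)

/-- `y` is isolated among 2π-periodic solutions of the Abel equation
(i.e. it is a limit cycle). -/
def IsAbelLimitCycle (a b c : ℝ) (y : ℝ → ℝ) : Prop :=
  IsAbelPeriodicSolution a b c y ∧
  ∃ ε > 0, ∀ z : ℝ → ℝ, IsAbelPeriodicSolution a b c z → |z 0 - y 0| < ε → z = y

/-- Auxiliary lemma: two periodic solutions that have pointwise positive product
(i.e. are everywhere of the same sign) and satisfy `(y₂ x₀)⁻¹ < (y₁ x₀)⁻¹`
somewhere lead to a contradiction, provided `0 < b` and `c ≤ 0`. -/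
lemma abel_aux (a b c : ℝ) (hb0 : 0 < b) (hc : c ≤ 0)
    (y₁ y₂ : ℝ → ℝ)
    (h₁ : IsAbelPeriodicSolution a b c y₁)
    (h₂ : IsAbelPeriodicSolution a b c y₂)
    (hpos : ∀ x : ℝ, 0 < y₁ x * y₂ x)
    (hlt : ∃ x₀ : ℝ, (y₂ x₀)⁻¹ < (y₁ x₀)⁻¹) : False := by
  obtain ⟨hd₁, hp₁⟩ := h₁
  obtain ⟨hd₂, hp₂⟩ := h₂
  have hy₁ : ∀ x, y₁ x ≠ 0 := fun x => left_ne_zero_of_mul (hpos x).ne'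
  have hy₂ : ∀ x, y₂ x ≠ 0 := fun x => right_ne_zero_of_mul (hpos x).ne'
  have hcy₁ : Continuous y₁ :=
    continuous_iff_continuousAt.2 fun x => (hd₁ x).continuousAt
  have hcy₂ : Continuous y₂ :=
    continuous_iff_continuousAt.2 fun x => (hd₂ x).continuousAt
  -- the coefficient of the linear ODE satisfied by ψ = 1/y₁ − 1/y₂
  have hq : Continuous (fun x => (Real.sin x - a) * (y₁ x * y₂ x)) :=
    (Real.continuous_sin.sub continuous_const).mul (hcy₁.mul hcy₂)
  have hQ : ∀ x : ℝ, HasDerivAt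
      (fun x => ∫ t in (0:ℝ)..x, (Real.sin t - a) * (y₁ t * y₂ t))
      ((Real.sin x - a) * (y₁ x * y₂ x)) x :=
    fun x => (hq.integral_hasStrictDerivAt 0 x).hasDerivAt
  -- derivatives of the reciprocals
  have hu₁ : ∀ x, HasDerivAt (fun x => (y₁ x)⁻¹)
      (-(b + c * Real.cos x) - (Real.sin x - a) * y₁ x) x := by
    intro x
    have h := (hd₁ x).inv (hy₁ x)
    refine h.congr_deriv ?_
    field_simp [hy₁ x, hy₂ x]
    ring
  have hu₂ : ∀ x, HasDerivAt (fun x => (y₂ x)⁻¹)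
      (-(b + c * Real.cos x) - (Real.sin x - a) * y₂ x) x := by
    intro x
    have h := (hd₂ x).inv (hy₂ x)
    refine h.congr_deriv ?_
    field_simp [hy₁ x, hy₂ x]
    ring
  -- ψ satisfies the linear ODE ψ' = q ψ
  have hψ : ∀ x, HasDerivAt (fun x => (y₁ x)⁻¹ - (y₂ x)⁻¹)
      (((Real.sin x - a) * (y₁ x * y₂ x)) * ((y₁ x)⁻¹ - (y₂ x)⁻¹)) x := by
    intro x
    have h := (hu₁ x).sub (hu₂ x)
    refine h.congr_deriv ?_
    field_simp [hy₁ x, hy₂ x]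
    ring
  -- hence ψ · exp(−Q) is constant
  have hφ : ∀ x, HasDerivAt (fun x => ((y₁ x)⁻¹ - (y₂ x)⁻¹) *
      Real.exp (-(∫ t in (0:ℝ)..x, (Real.sin t - a) * (y₁ t * y₂ t)))) 0 x := by
    intro x
    have h := (hψ x).mul ((hQ x).neg.exp)
    refine h.congr_deriv ?_
    ring
  have hconst : ∀ x : ℝ, ((y₁ x)⁻¹ - (y₂ x)⁻¹) *
      Real.exp (-(∫ t in (0:ℝ)..x, (Real.sin t - a) * (y₁ t * y₂ t)))
      = (y₁ 0)⁻¹ - (y₂ 0)⁻¹ := by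
    intro x
    have h := is_const_of_deriv_eq_zero (𝕜 := ℝ)
      (f := fun x => ((y₁ x)⁻¹ - (y₂ x)⁻¹) *
        Real.exp (-(∫ t in (0:ℝ)..x, (Real.sin t - a) * (y₁ t * y₂ t))))
      (fun x => (hφ x).differentiableAt) (fun x => (hφ x).deriv) x 0
    simpa using h
  obtain ⟨x₀, hx₀⟩ := hlt
  have hψx₀ : 0 < (y₁ x₀)⁻¹ - (y₂ x₀)⁻¹ := sub_pos.2 hx₀
  have hψ0 : 0 < (y₁ 0)⁻¹ - (y₂ 0)⁻¹ := by
    rw [← hconst x₀]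
    exact mul_pos hψx₀ (Real.exp_pos _)
  -- ψ is everywhere positive
  have hψpos : ∀ x : ℝ, 0 < (y₁ x)⁻¹ - (y₂ x)⁻¹ := by
    intro x
    have h := hconst x
    have hexp : 0 < Real.exp (-(∫ t in (0:ℝ)..x, (Real.sin t - a) * (y₁ t * y₂ t))) :=
      Real.exp_pos _
    nlinarith
  -- the monotone periodic function H
  have hH : ∀ x, HasDerivAt (fun x => (-c * (Real.sin x - a)) *
      ((y₁ x)⁻¹ - (y₂ x)⁻¹) - (((y₁ x)⁻¹) ^ 2 - ((y₂ x)⁻¹) ^ 2) / 2)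
      (((y₁ x)⁻¹ - (y₂ x)⁻¹) *
        (b - c * (Real.sin x - a) ^ 2 * (y₁ x * y₂ x))) x := by
    intro x
    have hF : HasDerivAt (fun x => -c * (Real.sin x - a)) (-c * Real.cos x) x :=
      ((Real.hasDerivAt_sin x).sub_const a).const_mul (-c)
    have h1 := hF.mul (hψ x)
    have h2 := ((hu₁ x).pow 2).sub ((hu₂ x).pow 2)
    have h3 := h1.sub (h2.div_const 2)
    refine h3.congr_deriv ?_
    norm_num only [pow_one]
    field_simp [hy₁ x, hy₂ x]
    ring
  have hmono : StrictMono (fun x => (-c * (Real.sin x - a)) *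
      ((y₁ x)⁻¹ - (y₂ x)⁻¹) - (((y₁ x)⁻¹) ^ 2 - ((y₂ x)⁻¹) ^ 2) / 2) := by
    apply strictMono_of_deriv_pos
    intro x
    rw [(hH x).deriv]
    have h4 : 0 ≤ -c * (Real.sin x - a) ^ 2 * (y₁ x * y₂ x) :=
      mul_nonneg (mul_nonneg (neg_nonneg.2 hc) (sq_nonneg _)) (hpos x).le
    have h5 := hψpos x
    nlinarith
  have hlt2 : (0:ℝ) < 0 + 2 * Real.pi := by
    have := Real.two_pi_pos
    linarith
  have hper : (fun x => (-c * (Real.sin x - a)) *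
      ((y₁ x)⁻¹ - (y₂ x)⁻¹) - (((y₁ x)⁻¹) ^ 2 - ((y₂ x)⁻¹) ^ 2) / 2) (0 + 2 * Real.pi)
      = (fun x => (-c * (Real.sin x - a)) *
      ((y₁ x)⁻¹ - (y₂ x)⁻¹) - (((y₁ x)⁻¹) ^ 2 - ((y₂ x)⁻¹) ^ 2) / 2) 0 := by
    simp only [Real.sin_add_two_pi, hp₁ 0, hp₂ 0]
  have := hmono hlt2
  rw [hper] at this
  exact lt_irrefl _ this

/-- Two 2π-periodic solutions of the Abel equation with everywhere the same
(nonzero) sign coincide, provided `0 < b` and `c ≤ 0`. -/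
lemma abel_same_sign_unique (a b c : ℝ) (hb0 : 0 < b) (hc : c ≤ 0)
    (y₁ y₂ : ℝ → ℝ)
    (h₁ : IsAbelPeriodicSolution a b c y₁)
    (h₂ : IsAbelPeriodicSolution a b c y₂)
    (hpos : ∀ x : ℝ, 0 < y₁ x * y₂ x) : y₁ = y₂ := by
  by_contra hne
  have hex : ∃ x₀, y₁ x₀ ≠ y₂ x₀ := by
    by_contra h
    push_neg at h
    exact hne (funext h)
  obtain ⟨x₀, hx₀⟩ := hex
  have hinv : (y₁ x₀)⁻¹ ≠ (y₂ x₀)⁻¹ := fun h => hx₀ (inv_injective h)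
  rcases hinv.lt_or_gt with h | h
  · exact abel_aux a b c hb0 hc y₂ y₁ h₂ h₁
      (fun x => by rw [mul_comm]; exact hpos x) ⟨x₀, h⟩
  · exact abel_aux a b c hb0 hc y₁ y₂ h₁ h₂ hpos ⟨x₀, h⟩

/-- For `0 < a < 1`, `c < 0` and `0 < b < −c·√(1 − a²)`, the Abel equation has
at most one limit cycle in the region `y > 0` and at most one limit cycle in
the region `y < 0`. -/
theorem abel_at_most_one_limit_cycle_each_region
    (a b c : ℝ) (ha0 : 0 < a) (ha1 : a < 1) (hc : c < 0)
    (hb0 : 0 < b) (hb : b < -c * Real.sqrt (1 - a ^ 2)) :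
    (¬ ∃ y₁ y₂ : ℝ → ℝ, y₁ ≠ y₂ ∧
      IsAbelLimitCycle a b c y₁ ∧ (∀ x : ℝ, 0 < y₁ x) ∧
      IsAbelLimitCycle a b c y₂ ∧ (∀ x : ℝ, 0 < y₂ x)) ∧
    (¬ ∃ y₁ y₂ : ℝ → ℝ, y₁ ≠ y₂ ∧
      IsAbelLimitCycle a b c y₁ ∧ (∀ x : ℝ, y₁ x < 0) ∧
      IsAbelLimitCycle a b c y₂ ∧ (∀ x : ℝ, y₂ x < 0)) := by
  constructor
  · rintro ⟨y₁, y₂, hne, hlc₁, hpos₁, hlc₂, hpos₂⟩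
    exact hne (abel_same_sign_unique a b c hb0 hc.le y₁ y₂ hlc₁.1 hlc₂.1
      (fun x => mul_pos (hpos₁ x) (hpos₂ x)))
  · rintro ⟨y₁, y₂, hne, hlc₁, hneg₁, hlc₂, hneg₂⟩
    exact hne (abel_same_sign_unique a b c hb0 hc.le y₁ y₂ hlc₁.1 hlc₂.1
      (fun x => mul_pos_of_neg_of_neg (hneg₁ x) (hneg₂ x)))
end

section
/- Consider the Abel equation (E) and its zero solution. (i) If b > 0, then the zero solution is upper unstable and lower stable: there exists δ > 0 such that every solution z of (E) with 0 < |z(0)| < δ is defined on [0, 2π] and satisfies z(2π) > z(0). (ii) If b = 0 and a > 0, then the zero solution is upper stable and lower stable: there exists δ > 0 such that every solution z of (E) with 0 < z(0) < δ is defined on [0, 2π] and satisfies z(2π) < z(0), and every solution z with −δ < z(0) < 0 is defined on [0, 2π] and satisfies z(2π) > z(0). -/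
open Real Set Filter intervalIntegral



private lemma abel_bound_s19 (a b c : ℝ) {x y r : ℝ} (hy : |y| ≤ r) (hr : r ≤ 1) :
    |(b + c * Real.cos x) * y ^ 2 + (Real.sin x - a) * y ^ 3| ≤
      (|a| + |b| + |c| + 1) * r ^ 2 := by
  have h1 : |b + c * Real.cos x| ≤ |b| + |c| := by
    calc |b + c * Real.cos x| ≤ |b| + |c * Real.cos x| := abs_add_le _ _
    _ ≤ |b| + |c| := by
        rw [abs_mul]
        nlinarith [abs_nonneg c, Real.abs_cos_le_one x, abs_nonneg (Real.cos x)]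
  have h2 : |Real.sin x - a| ≤ 1 + |a| := by
    calc |Real.sin x - a| ≤ |Real.sin x| + |a| := abs_sub _ _
    _ ≤ 1 + |a| := by linarith [Real.abs_sin_le_one x]
  have hr0 : 0 ≤ r := le_trans (abs_nonneg y) hy
  calc |(b + c * Real.cos x) * y ^ 2 + (Real.sin x - a) * y ^ 3|
      ≤ |(b + c * Real.cos x) * y ^ 2| + |(Real.sin x - a) * y ^ 3| := abs_add_le _ _
    _ = |b + c * Real.cos x| * |y| ^ 2 + |Real.sin x - a| * |y| ^ 3 := by
        rw [abs_mul, abs_mul, abs_pow, abs_pow]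
    _ ≤ (|b| + |c|) * r ^ 2 + (1 + |a|) * r ^ 3 := by
        gcongr <;> positivity
    _ ≤ (|a| + |b| + |c| + 1) * r ^ 2 := by
        have h3 : r ^ 3 ≤ r ^ 2 := by nlinarith
        nlinarith [abs_nonneg a, sq_nonneg r]


private lemma abel_apriori {z φ : ℝ → ℝ} {T r M : ℝ} (hT : 0 ≤ T) (hM : 0 ≤ M)
    (hz : ∀ x ∈ Set.Icc 0 T, HasDerivAt z (φ x) x)
    (hbd : ∀ x ∈ Set.Icc 0 T, |z x| ≤ r → |φ x| ≤ M)
    (h0 : |z 0| + M * T < r) :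
    ∀ x ∈ Set.Icc 0 T, |z x - z 0| ≤ M * x := by
  have hcont : ContinuousOn z (Set.Icc 0 T) :=
    fun x hx => ((hz x hx).continuousAt).continuousWithinAt
  have hlt : ∀ x ∈ Set.Icc 0 T, |z x| ≤ r := by
    by_contra hcon
    push_neg at hcon
    obtain ⟨x₁, hx₁, hx₁r⟩ := hcon
    set S : Set ℝ := Set.Icc 0 T ∩ (fun x => |z x|) ⁻¹' Set.Ici r with hS
    have hSc : IsClosed S := hcont.abs.preimage_isClosed_of_isClosed isClosed_Icc isClosed_Ici
    have hSne : S.Nonempty := ⟨x₁, hx₁, hx₁r.le⟩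
    have hSbdd : BddBelow S := ⟨0, fun x hx => hx.1.1⟩
    set t := sInf S with ht
    have htS : t ∈ S := hSc.csInf_mem hSne hSbdd
    have htIcc : t ∈ Set.Icc 0 T := htS.1
    have htr : r ≤ |z t| := htS.2
    have htpos : 0 < t := by
      rcases lt_or_eq_of_le htIcc.1 with h | h
      · exact h
      · exfalso; rw [← h] at htr; nlinarith
    have hlow : ∀ x ∈ Set.Ico 0 t, |z x| ≤ r := by
      intro x hx
      by_contra hxr
      push_neg at hxr
      have hxS : x ∈ S := ⟨⟨hx.1, le_trans hx.2.le htIcc.2⟩, hxr.le⟩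
      exact absurd (csInf_le hSbdd hxS) (not_le.mpr hx.2)
    -- mean value on [0, t]
    have hsub : Set.Icc 0 t ⊆ Set.Icc 0 T := Set.Icc_subset_Icc le_rfl htIcc.2
    have hbd' : ∀ x ∈ Set.Ico 0 t, ‖φ x‖ ≤ M := by
      intro x hx
      rw [Real.norm_eq_abs]
      exact hbd x (hsub (Set.Ico_subset_Icc_self hx)) (hlow x hx)
    have hmv := norm_image_sub_le_of_norm_deriv_le_segment'
      (fun x hx => (hz x (hsub hx)).hasDerivWithinAt) hbd' t
      (Set.right_mem_Icc.mpr htpos.le)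
    rw [Real.norm_eq_abs] at hmv
    have : |z t| ≤ |z 0| + M * T := by
      have h1 : |z t| ≤ |z t - z 0| + |z 0| := by
        calc |z t| = |z t - z 0 + z 0| := by ring_nf
        _ ≤ |z t - z 0| + |z 0| := abs_add_le _ _
      have h2 : M * (t - 0) ≤ M * T := by
        have := htIcc.2; nlinarith
      linarith
    linarith
  -- now the global mean value bound
  intro x hx
  have hbd' : ∀ y ∈ Set.Ico 0 T, ‖φ y‖ ≤ M := fun y hy => by
    rw [Real.norm_eq_abs]
    exact hbd y (Set.Ico_subset_Icc_self hy) (hlt y (Set.Ico_subset_Icc_self hy))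
  have hmv := norm_image_sub_le_of_norm_deriv_le_segment'
    (fun y hy => (hz y hy).hasDerivWithinAt) hbd' x hx
  rw [Real.norm_eq_abs] at hmv
  simpa using hmv


private lemma abel_return (a b c : ℝ) {z : ℝ → ℝ}
    (hz : ∀ x ∈ Set.Icc (0:ℝ) (2 * Real.pi), HasDerivAt z
      ((b + c * Real.cos x) * (z x) ^ 2 + (Real.sin x - a) * (z x) ^ 3) x)
    (hne : ∀ x ∈ Set.Icc (0:ℝ) (2 * Real.pi), z x ≠ 0) :
    (z 0)⁻¹ - (z (2 * Real.pi))⁻¹ =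
      2 * Real.pi * b + ∫ x in (0:ℝ)..(2 * Real.pi), (Real.sin x - a) * z x := by
  have hpi : (0:ℝ) ≤ 2 * Real.pi := by positivity
  have huIcc : Set.uIcc (0:ℝ) (2 * Real.pi) = Set.Icc 0 (2 * Real.pi) := Set.uIcc_of_le hpi
  set w : ℝ → ℝ := fun x => -(z x)⁻¹ with hw
  set g : ℝ → ℝ := fun x => (b + c * Real.cos x) + (Real.sin x - a) * z x with hg
  have hcont : ContinuousOn z (Set.Icc 0 (2 * Real.pi)) :=
    fun x hx => ((hz x hx).continuousAt).continuousWithinAt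
  have hwderiv : ∀ x ∈ Set.uIcc (0:ℝ) (2 * Real.pi), HasDerivAt w (g x) x := by
    intro x hx
    rw [huIcc] at hx
    have h1 := ((hz x hx).inv (hne x hx)).neg
    refine HasDerivAt.congr_deriv h1 ?_
    have hzx := hne x hx
    rw [hg]
    field_simp
  have hgcont : ContinuousOn g (Set.uIcc (0:ℝ) (2 * Real.pi)) := by
    rw [huIcc]
    apply ContinuousOn.add
    · exact (continuous_const.add (continuous_const.mul Real.continuous_cos)).continuousOn
    · exact ((Real.continuous_sin.sub continuous_const).continuousOn).mul hcont
  have hgint : IntervalIntegrable g MeasureTheory.volume 0 (2 * Real.pi) :=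
    hgcont.intervalIntegrable
  have hftc := intervalIntegral.integral_eq_sub_of_hasDerivAt hwderiv hgint
  have hsplit : ∫ x in (0:ℝ)..(2 * Real.pi), g x =
      (∫ x in (0:ℝ)..(2 * Real.pi), (b + c * Real.cos x)) +
      ∫ x in (0:ℝ)..(2 * Real.pi), (Real.sin x - a) * z x := by
    apply intervalIntegral.integral_add
    · exact (continuous_const.add (continuous_const.mul Real.continuous_cos)).intervalIntegrable _ _
    · apply ContinuousOn.intervalIntegrable
      rw [huIcc]
      exact ((Real.continuous_sin.sub continuous_const).continuousOn).mul hcont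
  have hfirst : (∫ x in (0:ℝ)..(2 * Real.pi), (b + c * Real.cos x)) = 2 * Real.pi * b := by
    rw [intervalIntegral.integral_add (f := fun _ => b) (g := fun x => c * Real.cos x) (intervalIntegrable_const)
      ((continuous_const.mul Real.continuous_cos).intervalIntegrable _ _),
      intervalIntegral.integral_const, intervalIntegral.integral_const_mul, integral_cos]
    simp [Real.sin_two_pi]
  rw [hsplit, hfirst] at hftc
  have heq : w (2 * Real.pi) - w 0 = (z 0)⁻¹ - (z (2 * Real.pi))⁻¹ := by simp [hw]; ring
  rw [heq] at hftc
  exact hftc.symm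

private lemma lt_of_inv_lt_inv'' {u v : ℝ} (h : 0 < u * v) (hlt : u⁻¹ < v⁻¹) : v < u := by
  have hu : u ≠ 0 := by rintro rfl; simp at h
  have hv : v ≠ 0 := by rintro rfl; simp at h
  have h2 := mul_lt_mul_of_pos_right hlt h
  have e1 : u⁻¹ * (u * v) = v := by field_simp
  have e2 : v⁻¹ * (u * v) = u := by field_simp
  rwa [e1, e2] at h2


private lemma abel_split (a : ℝ) {z : ℝ → ℝ}
    (hcont : ContinuousOn z (Set.Icc (0:ℝ) (2 * Real.pi))) :
    ∫ x in (0:ℝ)..(2 * Real.pi), (Real.sin x - a) * z x =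
      -(2 * Real.pi * a * z 0) +
        ∫ x in (0:ℝ)..(2 * Real.pi), (Real.sin x - a) * (z x - z 0) := by
  have hpi : (0:ℝ) ≤ 2 * Real.pi := by positivity
  have huIcc : Set.uIcc (0:ℝ) (2 * Real.pi) = Set.Icc 0 (2 * Real.pi) := Set.uIcc_of_le hpi
  have hsa : IntervalIntegrable (fun x => Real.sin x - a) MeasureTheory.volume 0 (2 * Real.pi) :=
    (Real.continuous_sin.sub continuous_const).intervalIntegrable _ _
  have h1 : IntervalIntegrable (fun x => (Real.sin x - a) * z x)
      MeasureTheory.volume 0 (2 * Real.pi) := by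
    apply ContinuousOn.intervalIntegrable
    rw [huIcc]
    exact ((Real.continuous_sin.sub continuous_const).continuousOn).mul hcont
  have h2 : IntervalIntegrable (fun x => (Real.sin x - a) * z 0)
      MeasureTheory.volume 0 (2 * Real.pi) :=
    ((Real.continuous_sin.sub continuous_const).mul continuous_const).intervalIntegrable _ _
  have hsub : ∫ x in (0:ℝ)..(2 * Real.pi), (Real.sin x - a) * (z x - z 0) =
      (∫ x in (0:ℝ)..(2 * Real.pi), (Real.sin x - a) * z x) -
      ∫ x in (0:ℝ)..(2 * Real.pi), (Real.sin x - a) * z 0 := by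
    rw [← intervalIntegral.integral_sub h1 h2]
    congr 1
    ext x
    ring
  have hconst : ∫ x in (0:ℝ)..(2 * Real.pi), (Real.sin x - a) * z 0 =
      -(2 * Real.pi * a * z 0) := by
    rw [intervalIntegral.integral_mul_const, intervalIntegral.integral_sub
      (Real.continuous_sin.intervalIntegrable _ _) intervalIntegrable_const,
      integral_sin, intervalIntegral.integral_const]
    simp [Real.cos_two_pi]
    try ring
  rw [hsub, hconst]
  ring

private lemma abel_exists_s19 (a b c : ℝ) {z0 : ℝ}
    (h1 : |z0| ≤ 1/2)
    (h2 : |z0| ≤ (4 * (|a| + |b| + |c| + 1) * (2 * Real.pi + 1))⁻¹) :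
    ∃ z : ℝ → ℝ, z 0 = z0 ∧ ∀ x ∈ Set.Icc (0:ℝ) (2 * Real.pi),
      HasDerivAt z
        ((b + c * Real.cos x) * (z x) ^ 2 + (Real.sin x - a) * (z x) ^ 3) x := by
  set K : ℝ := |a| + |b| + |c| + 1 with hK
  have hK1 : 1 ≤ K := by rw [hK]; linarith [abs_nonneg a, abs_nonneg b, abs_nonneg c]
  have hK0 : 0 < K := by linarith
  have hpi : 0 < Real.pi := Real.pi_pos
  set v : ℝ → ℝ → ℝ := fun t y => (b + c * Real.cos t) * y ^ 2 + (Real.sin t - a) * y ^ 3 with hv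
  have hball : ∀ y ∈ Metric.closedBall z0 |z0|, |y| ≤ 2 * |z0| := by
    intro y hy
    rw [Metric.mem_closedBall, Real.dist_eq] at hy
    calc |y| = |y - z0 + z0| := by ring_nf
    _ ≤ |y - z0| + |z0| := abs_add_le _ _
    _ ≤ 2 * |z0| := by linarith
  have hr1 : 2 * |z0| ≤ 1 := by linarith
  have hpl : IsPicardLindelof v (tmin := -1) (tmax := 2 * Real.pi + 1)
      ⟨0, by constructor <;> linarith⟩ z0 ⟨|z0|, abs_nonneg z0⟩ 0
      (Real.toNNReal (K * (2 * |z0|) ^ 2)) (Real.toNNReal (3 * K)) := by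
    constructor
    · -- Lipschitz
      intro t _
      rw [lipschitzOnWith_iff_dist_le_mul]
      intro y1 hy1 y2 hy2
      rw [Real.dist_eq, Real.dist_eq, Real.coe_toNNReal _ (by linarith)]
      have hb1 := hball y1 hy1
      have hb2 := hball y2 hy2
      have ha1 : |y1| ≤ 1 := by linarith
      have ha2 : |y2| ≤ 1 := by linarith
      have key : v t y1 - v t y2 = (y1 - y2) *
          ((b + c * Real.cos t) * (y1 + y2) +
            (Real.sin t - a) * (y1 ^ 2 + y1 * y2 + y2 ^ 2)) := by
        simp only [hv]; ring
      rw [key, abs_mul, mul_comm (3 * K) |y1 - y2|]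
      apply mul_le_mul_of_nonneg_left _ (abs_nonneg _)
      have e1 : |b + c * Real.cos t| ≤ |b| + |c| := by
        calc |b + c * Real.cos t| ≤ |b| + |c * Real.cos t| := abs_add_le _ _
        _ ≤ |b| + |c| := by
            rw [abs_mul]
            nlinarith [abs_nonneg c, Real.abs_cos_le_one t, abs_nonneg (Real.cos t)]
      have e2 : |Real.sin t - a| ≤ 1 + |a| := by
        calc |Real.sin t - a| ≤ |Real.sin t| + |a| := abs_sub _ _
        _ ≤ 1 + |a| := by linarith [Real.abs_sin_le_one t]
      have e3 : |y1 + y2| ≤ 2 := by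
        calc |y1 + y2| ≤ |y1| + |y2| := abs_add_le _ _
        _ ≤ 2 := by linarith
      have e4 : |y1 ^ 2 + y1 * y2 + y2 ^ 2| ≤ 3 := by
        calc |y1 ^ 2 + y1 * y2 + y2 ^ 2| ≤ |y1 ^ 2 + y1 * y2| + |y2 ^ 2| := abs_add_le _ _
        _ ≤ |y1 ^ 2| + |y1 * y2| + |y2 ^ 2| := by linarith [abs_add_le (y1 ^ 2) (y1 * y2)]
        _ = |y1| ^ 2 + |y1| * |y2| + |y2| ^ 2 := by rw [abs_mul, abs_pow, abs_pow]
        _ ≤ 3 := by nlinarith [abs_nonneg y1, abs_nonneg y2]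
      calc |(b + c * Real.cos t) * (y1 + y2) +
            (Real.sin t - a) * (y1 ^ 2 + y1 * y2 + y2 ^ 2)|
          ≤ |b + c * Real.cos t| * |y1 + y2| +
            |Real.sin t - a| * |y1 ^ 2 + y1 * y2 + y2 ^ 2| := by
            rw [← abs_mul, ← abs_mul]; exact abs_add_le _ _
        _ ≤ (|b| + |c|) * 2 + (1 + |a|) * 3 := by
            gcongr <;> positivity
        _ ≤ 3 * K := by rw [hK]; linarith [abs_nonneg b, abs_nonneg c]
    · -- continuity in t
      intro y _
      exact (((continuous_const.add (continuous_const.mul Real.continuous_cos)).mul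
        continuous_const).add
        ((Real.continuous_sin.sub continuous_const).mul continuous_const)).continuousOn
    · -- norm bound
      intro t _ y hy
      rw [Real.norm_eq_abs, Real.coe_toNNReal _ (by positivity)]
      exact abel_bound_s19 a b c (hball y hy) hr1
    · -- C * interval ≤ R
      have hmax : max (2 * Real.pi + 1 - 0) (0 - -1) = 2 * Real.pi + 1 := by
        rw [max_eq_left] <;> linarith
      rw [Real.coe_toNNReal _ (by positivity)]
      show K * (2 * |z0|) ^ 2 * max (2 * Real.pi + 1 - 0) (0 - -1) ≤ |z0| - 0
      rw [hmax, sub_zero]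
      have hmul : 4 * K * (2 * Real.pi + 1) * |z0| ≤ 1 := by
        have hpos : (0:ℝ) < 4 * K * (2 * Real.pi + 1) := by positivity
        calc 4 * K * (2 * Real.pi + 1) * |z0|
            ≤ 4 * K * (2 * Real.pi + 1) * (4 * K * (2 * Real.pi + 1))⁻¹ := by
              exact mul_le_mul_of_nonneg_left h2 hpos.le
          _ = 1 := mul_inv_cancel₀ hpos.ne'
      nlinarith [abs_nonneg z0, sq_abs z0]
  obtain ⟨f, hf0, hf⟩ := hpl.exists_eq_forall_mem_Icc_hasDerivWithinAt₀
  refine ⟨f, hf0, fun x hx => ?_⟩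
  have hx' : x ∈ Set.Icc (-1 : ℝ) (2 * Real.pi + 1) :=
    ⟨by linarith [hx.1], by linarith [hx.2]⟩
  exact (hf x hx').hasDerivAt (Icc_mem_nhds (by linarith [hx.1]) (by linarith [hx.2]))

private lemma abel_common (a b c : ℝ) {z : ℝ → ℝ}
    (hz : ∀ x ∈ Set.Icc (0:ℝ) (2 * Real.pi), HasDerivAt z
      ((b + c * Real.cos x) * (z x) ^ 2 + (Real.sin x - a) * (z x) ^ 3) x)
    (hne0 : z 0 ≠ 0) (h12 : |z 0| ≤ 1/2)
    (h8 : 8 * Real.pi * (|a| + |b| + |c| + 1) * |z 0| < 1) :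
    (∀ x ∈ Set.Icc (0:ℝ) (2 * Real.pi),
        |z x - z 0| ≤ (|a| + |b| + |c| + 1) * (2 * |z 0|) ^ 2 * x) ∧
    (∀ x ∈ Set.Icc (0:ℝ) (2 * Real.pi), 0 < z x * z 0) ∧
    (∀ x ∈ Set.Icc (0:ℝ) (2 * Real.pi), z x ≠ 0) ∧
    (∀ x ∈ Set.Icc (0:ℝ) (2 * Real.pi), |z x| ≤ 2 * |z 0|) := by
  have hpi : 0 < Real.pi := Real.pi_pos
  set K : ℝ := |a| + |b| + |c| + 1 with hK
  have hK1 : 1 ≤ K := by rw [hK]; linarith [abs_nonneg a, abs_nonneg b, abs_nonneg c]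
  have hz0 : 0 < |z 0| := abs_pos.mpr hne0
  set M : ℝ := K * (2 * |z 0|) ^ 2 with hM
  have hMnn : 0 ≤ M := by rw [hM]; positivity
  have hbd : ∀ x ∈ Set.Icc (0:ℝ) (2 * Real.pi), |z x| ≤ 2 * |z 0| →
      |(b + c * Real.cos x) * (z x) ^ 2 + (Real.sin x - a) * (z x) ^ 3| ≤ M := by
    intro x _ hx
    exact abel_bound_s19 a b c hx (by linarith)
  have hMT : M * (2 * Real.pi) < |z 0| := by
    have h2 : M * (2 * Real.pi) = 8 * Real.pi * K * |z 0| * |z 0| := by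
      rw [hM]; ring
    rw [h2]
    nlinarith [mul_lt_mul_of_pos_right h8 hz0]
  have h0 : |z 0| + M * (2 * Real.pi) < 2 * |z 0| := by linarith
  have hbound := abel_apriori (by positivity) hMnn hz hbd h0
  refine ⟨hbound, ?_, ?_, ?_⟩
  · intro x hx
    have h1 := hbound x hx
    have h2 : M * x ≤ M * (2 * Real.pi) := by
      have := hx.2; nlinarith
    have hclose : |z x - z 0| < |z 0| := by linarith
    have hsq : (z x - z 0) ^ 2 < (z 0) ^ 2 := by
      have := pow_lt_pow_left₀ hclose (abs_nonneg _) (two_ne_zero)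
      rwa [sq_abs, sq_abs] at this
    nlinarith [sq_nonneg (z x)]
  · intro x hx h
    have h1 := hbound x hx
    have h2 : M * x ≤ M * (2 * Real.pi) := by
      have := hx.2; nlinarith
    rw [h] at h1
    simp only [zero_sub, abs_neg] at h1
    linarith
  · intro x hx
    have h1 := hbound x hx
    have h2 : M * x ≤ M * (2 * Real.pi) := by
      have := hx.2; nlinarith
    calc |z x| = |z x - z 0 + z 0| := by ring_nf
    _ ≤ |z x - z 0| + |z 0| := abs_add_le _ _
    _ ≤ 2 * |z 0| := by linarith

/-- Stability of the zero solution of the Abel equation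
`y′ = (b + c·cos x)·y² + (sin x − a)·y³`.
(i) If `b > 0`, the zero solution is upper unstable and lower stable: all small
nonzero solutions satisfy `z(2π) > z(0)`.
(ii) If `b = 0` and `a > 0`, the zero solution is upper stable and lower
stable: small positive solutions satisfy `z(2π) < z(0)` and small negative
solutions satisfy `z(2π) > z(0)`. -/
theorem abel_zero_solution_stability (a b c : ℝ) :
    ((0 < b) →
      ∃ δ > 0,
        (∀ z0 : ℝ, z0 ≠ 0 → |z0| < δ →
          ∃ z : ℝ → ℝ, z 0 = z0 ∧ ∀ x ∈ Set.Icc (0:ℝ) (2 * Real.pi),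
            HasDerivAt z
              ((b + c * Real.cos x) * (z x) ^ 2 + (Real.sin x - a) * (z x) ^ 3) x) ∧
        (∀ z : ℝ → ℝ,
          (∀ x ∈ Set.Icc (0:ℝ) (2 * Real.pi), HasDerivAt z
            ((b + c * Real.cos x) * (z x) ^ 2 + (Real.sin x - a) * (z x) ^ 3) x) →
          z 0 ≠ 0 → |z 0| < δ → z 0 < z (2 * Real.pi))) ∧
    ((b = 0) → (0 < a) →
      ∃ δ > 0,
        (∀ z0 : ℝ, z0 ≠ 0 → |z0| < δ →
          ∃ z : ℝ → ℝ, z 0 = z0 ∧ ∀ x ∈ Set.Icc (0:ℝ) (2 * Real.pi),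
            HasDerivAt z
              ((b + c * Real.cos x) * (z x) ^ 2 + (Real.sin x - a) * (z x) ^ 3) x) ∧
        (∀ z : ℝ → ℝ,
          (∀ x ∈ Set.Icc (0:ℝ) (2 * Real.pi), HasDerivAt z
            ((b + c * Real.cos x) * (z x) ^ 2 + (Real.sin x - a) * (z x) ^ 3) x) →
          (0 < z 0 → z 0 < δ → z (2 * Real.pi) < z 0) ∧
          (-δ < z 0 → z 0 < 0 → z 0 < z (2 * Real.pi)))) := by
  have hpi : 0 < Real.pi := Real.pi_pos
  set K : ℝ := |a| + |b| + |c| + 1 with hK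
  have hK1 : 1 ≤ K := by rw [hK]; linarith [abs_nonneg a, abs_nonneg b, abs_nonneg c]
  have hK0 : 0 < K := by linarith
  have h2pi : (0:ℝ) ≤ 2 * Real.pi := by positivity
  have hmem2pi : (2 * Real.pi) ∈ Set.Icc (0:ℝ) (2 * Real.pi) := ⟨h2pi, le_rfl⟩
  constructor
  · -- Part (i): b > 0
    intro hb
    set δ : ℝ := min (min (1/2) ((8 * Real.pi * K)⁻¹))
      (min ((4 * K * (2 * Real.pi + 1))⁻¹) (b / (4 * (1 + |a|)))) with hδ
    have hδpos : 0 < δ := by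
      apply lt_min <;> apply lt_min
      · norm_num
      · positivity
      · positivity
      · positivity
    refine ⟨δ, hδpos, ?_, ?_⟩
    · intro z0 hz0 hz0δ
      apply abel_exists_s19 a b c
      · exact le_of_lt (lt_of_lt_of_le hz0δ ((min_le_left _ _).trans (min_le_left _ _)))
      · exact le_of_lt (lt_of_lt_of_le hz0δ ((min_le_right _ _).trans (min_le_left _ _)))
    · intro z hz hne0 hzδ
      have hz0 : 0 < |z 0| := abs_pos.mpr hne0
      have hlt1 : |z 0| < 1/2 :=
        lt_of_lt_of_le hzδ ((min_le_left _ _).trans (min_le_left _ _))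
      have hlt2 : |z 0| < (8 * Real.pi * K)⁻¹ :=
        lt_of_lt_of_le hzδ ((min_le_left _ _).trans (min_le_right _ _))
      have hlt4 : |z 0| < b / (4 * (1 + |a|)) :=
        lt_of_lt_of_le hzδ ((min_le_right _ _).trans (min_le_right _ _))
      have h8 : 8 * Real.pi * K * |z 0| < 1 := by
        have hpos : (0:ℝ) < 8 * Real.pi * K := by positivity
        calc 8 * Real.pi * K * |z 0| < 8 * Real.pi * K * (8 * Real.pi * K)⁻¹ :=
              mul_lt_mul_of_pos_left hlt2 hpos
        _ = 1 := mul_inv_cancel₀ hpos.ne'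
      obtain ⟨hbound, hsign, hnes, habs⟩ := abel_common a b c hz hne0 hlt1.le h8
      have hret := abel_return a b c hz hnes
      have hIbd : |∫ x in (0:ℝ)..(2 * Real.pi), (Real.sin x - a) * z x| ≤
          ((1 + |a|) * (2 * |z 0|)) * |2 * Real.pi - 0| := by
        rw [← Real.norm_eq_abs]
        apply intervalIntegral.norm_integral_le_of_norm_le_const
        intro x hx
        rw [Set.uIoc_of_le h2pi] at hx
        have hx' : x ∈ Set.Icc (0:ℝ) (2 * Real.pi) := Set.Ioc_subset_Icc_self hx
        rw [Real.norm_eq_abs, abs_mul]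
        have e2 : |Real.sin x - a| ≤ 1 + |a| := by
          calc |Real.sin x - a| ≤ |Real.sin x| + |a| := abs_sub _ _
          _ ≤ 1 + |a| := by linarith [Real.abs_sin_le_one x]
        exact mul_le_mul e2 (habs x hx') (abs_nonneg _) (by positivity)
      rw [abs_of_nonneg (by linarith : (0:ℝ) ≤ 2 * Real.pi - 0)] at hIbd
      have h4 : 4 * (1 + |a|) * |z 0| < b := by
        have hd : (0:ℝ) < 4 * (1 + |a|) := by positivity
        have := (lt_div_iff₀ hd).mp hlt4
        linarith
      have hposdiff : 0 < (z 0)⁻¹ - (z (2 * Real.pi))⁻¹ := by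
        rw [hret]
        nlinarith [mul_lt_mul_of_pos_left h4 hpi, mul_pos hpi hb,
          neg_abs_le (∫ x in (0:ℝ)..(2 * Real.pi), (Real.sin x - a) * z x), hIbd]
      exact lt_of_inv_lt_inv'' (hsign (2 * Real.pi) hmem2pi) (by linarith)
  · -- Part (ii): b = 0, a > 0
    intro hb0 ha
    subst hb0
    have haK : |a| = a := abs_of_pos ha
    set δ : ℝ := min (min (1/2) ((8 * Real.pi * K)⁻¹))
      (min ((4 * K * (2 * Real.pi + 1))⁻¹) (a / (8 * Real.pi * K * (1 + |a|)))) with hδ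
    have hδpos : 0 < δ := by
      apply lt_min <;> apply lt_min
      · norm_num
      · positivity
      · positivity
      · positivity
    refine ⟨δ, hδpos, ?_, ?_⟩
    · intro z0 hz0 hz0δ
      apply abel_exists_s19 a 0 c
      · exact le_of_lt (lt_of_lt_of_le hz0δ ((min_le_left _ _).trans (min_le_left _ _)))
      · refine le_of_lt (lt_of_lt_of_le hz0δ ((min_le_right _ _).trans ?_))
        rw [hK] at *
        exact min_le_left _ _
    · intro z hz
      have key : z 0 ≠ 0 → |z 0| < δ →
          0 < z (2 * Real.pi) * z 0 ∧
          ∃ J : ℝ, (z 0)⁻¹ - (z (2 * Real.pi))⁻¹ = -(2 * Real.pi * a * z 0) + J ∧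
            |J| < 2 * Real.pi * a * |z 0| := by
        intro hne0 hzδ
        have hz0 : 0 < |z 0| := abs_pos.mpr hne0
        have hlt1 : |z 0| < 1/2 :=
          lt_of_lt_of_le hzδ ((min_le_left _ _).trans (min_le_left _ _))
        have hlt2 : |z 0| < (8 * Real.pi * K)⁻¹ :=
          lt_of_lt_of_le hzδ ((min_le_left _ _).trans (min_le_right _ _))
        have hlt4 : |z 0| < a / (8 * Real.pi * K * (1 + |a|)) :=
          lt_of_lt_of_le hzδ ((min_le_right _ _).trans (min_le_right _ _))
        have h8 : 8 * Real.pi * K * |z 0| < 1 := by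
          have hpos : (0:ℝ) < 8 * Real.pi * K := by positivity
          calc 8 * Real.pi * K * |z 0| < 8 * Real.pi * K * (8 * Real.pi * K)⁻¹ :=
                mul_lt_mul_of_pos_left hlt2 hpos
          _ = 1 := mul_inv_cancel₀ hpos.ne'
        obtain ⟨hbound, hsign, hnes, habs⟩ := abel_common a 0 c hz hne0 hlt1.le
          (by rw [hK] at h8; exact h8)
        have hret := abel_return a 0 c hz hnes
        have hcont : ContinuousOn z (Set.Icc (0:ℝ) (2 * Real.pi)) :=
          fun x hx => ((hz x hx).continuousAt).continuousWithinAt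
        have hsplit := abel_split a hcont
        refine ⟨hsign (2 * Real.pi) hmem2pi,
          ∫ x in (0:ℝ)..(2 * Real.pi), (Real.sin x - a) * (z x - z 0), ?_, ?_⟩
        · rw [hret, hsplit]; try ring
        · -- |J| < 2πa|z0|
          set K0 : ℝ := |a| + |0| + |c| + 1 with hK0'
          have hKK0 : K0 = K := by rw [hK0', hK]
          have hJbd : |∫ x in (0:ℝ)..(2 * Real.pi), (Real.sin x - a) * (z x - z 0)| ≤
              ((1 + |a|) * (K * (2 * |z 0|) ^ 2 * (2 * Real.pi))) * |2 * Real.pi - 0| := by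
            rw [← Real.norm_eq_abs]
            apply intervalIntegral.norm_integral_le_of_norm_le_const
            intro x hx
            rw [Set.uIoc_of_le h2pi] at hx
            have hx' : x ∈ Set.Icc (0:ℝ) (2 * Real.pi) := Set.Ioc_subset_Icc_self hx
            rw [Real.norm_eq_abs, abs_mul]
            have e2 : |Real.sin x - a| ≤ 1 + |a| := by
              calc |Real.sin x - a| ≤ |Real.sin x| + |a| := abs_sub _ _
              _ ≤ 1 + |a| := by linarith [Real.abs_sin_le_one x]
            have e3 : |z x - z 0| ≤ K * (2 * |z 0|) ^ 2 * (2 * Real.pi) := by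
              have h1 := hbound x hx'
              rw [hKK0] at h1
              have h2 : K * (2 * |z 0|) ^ 2 * x ≤ K * (2 * |z 0|) ^ 2 * (2 * Real.pi) := by
                have := hx'.2
                have hnn : (0:ℝ) ≤ K * (2 * |z 0|) ^ 2 := by positivity
                nlinarith
              linarith
            exact mul_le_mul e2 e3 (abs_nonneg _) (by positivity)
          rw [abs_of_nonneg (by linarith : (0:ℝ) ≤ 2 * Real.pi - 0)] at hJbd
          have h4 : 8 * Real.pi * K * (1 + |a|) * |z 0| < a := by
            have hd : (0:ℝ) < 8 * Real.pi * K * (1 + |a|) := by positivity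
            have := (lt_div_iff₀ hd).mp hlt4
            linarith
          have hJbd2 : (1 + |a|) * (K * (2 * |z 0|) ^ 2 * (2 * Real.pi)) * (2 * Real.pi)
              < 2 * Real.pi * a * |z 0| := by
            have hstep := mul_lt_mul_of_pos_right h4 (by positivity : (0:ℝ) < 2 * Real.pi * |z 0|)
            nlinarith [sq_abs (z 0), sq_nonneg (|z 0|)]
          linarith
      refine ⟨?_, ?_⟩
      · intro hpos hlt
        have hne0 : z 0 ≠ 0 := ne_of_gt hpos
        have hzδ : |z 0| < δ := by rw [abs_of_pos hpos]; exact hlt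
        obtain ⟨hsgn, J, hEq, hJ⟩ := key hne0 hzδ
        have habs0 : |z 0| = z 0 := abs_of_pos hpos
        have : (z 0)⁻¹ - (z (2 * Real.pi))⁻¹ < 0 := by
          rw [hEq]
          have := neg_abs_le J
          rw [habs0] at hJ
          linarith [abs_le.mp (le_refl |J|)]
        exact lt_of_inv_lt_inv'' (by nlinarith [hsgn] : 0 < z 0 * z (2 * Real.pi)) (by linarith)
      · intro hgt hneg
        have hne0 : z 0 ≠ 0 := ne_of_lt hneg
        have hzδ : |z 0| < δ := by rw [abs_of_neg hneg]; linarith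
        obtain ⟨hsgn, J, hEq, hJ⟩ := key hne0 hzδ
        have habs0 : |z 0| = -z 0 := abs_of_neg hneg
        have : 0 < (z 0)⁻¹ - (z (2 * Real.pi))⁻¹ := by
          rw [hEq]
          rw [habs0] at hJ
          have := neg_abs_le J
          linarith
        exact lt_of_inv_lt_inv'' hsgn (by linarith)
end
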